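/- arXiv:2312.10855 — 5 statements merged into one kernel-verified Lean document; each statement's English description precedes it below -/
import Mathlib

section
/- Fix a positive integer m, let B = (b_1, ..., b_n) be a singleton board with respect to m, and fix 0 ≤ k ≤ n. Let 𝓕'_k be the set of all file placements of k rooks on B that are NOT m-level rook placements. Then Σ_{F ∈ 𝓕'_k} wt_m(F) = 0; equivalently, f_{k,m}(B) = r_{k,m}(B). -/
open scoped Classical

/-- The falling factorial `x↓ₖ = ∏_{i=0}^{k-1} (x - i)`. -/
noncomputable def ffall (x : ℝ) (k : ℕ) : ℝ := ∏ i ∈ Finset.range k, (x - i)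

/-- The `m`-falling factorial `x↓_{k,m} = ∏_{i=0}^{k-1} (x - m·i)`. -/
noncomputable def mfall (x : ℝ) (m k : ℕ) : ℝ := ∏ i ∈ Finset.range k, (x - m * i)

/-- The predicate that `b 0 ≤ b 1 ≤ ... ≤ b (n-1)`, i.e. the column heights of a
Ferrers board with `n` columns are weakly increasing.  (Column `i`, for `0 ≤ i < n`,
corresponds to column `i+1` = `b_{i+1}` of the paper.) -/
def FerrersMono (n : ℕ) (b : ℕ → ℕ) : Prop := ∀ i, i + 1 < n → b i ≤ b (i + 1)

/-- The cells of the Ferrers board with column heights `b 0, …, b (n-1)`: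
pairs `(i, j)` with `i < n` (a column, 0-indexed) and `1 ≤ j ≤ b i` (a row, 1-indexed). -/
def cellFinset (n : ℕ) (b : ℕ → ℕ) : Finset (ℕ × ℕ) :=
  (Finset.range n ×ˢ Finset.Icc 1 ((Finset.range n).sup b)).filter fun p => p.2 ≤ b p.1

/-- The file placements of `k` rooks on the board: `k` cells, no two in the same column. -/
def filePlacements (n : ℕ) (b : ℕ → ℕ) (k : ℕ) : Finset (Finset (ℕ × ℕ)) :=
  (cellFinset n b).powerset.filter fun P =>
    P.card = k ∧ ∀ p ∈ P, ∀ q ∈ P, p ≠ q → p.1 ≠ q.1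

/-- The `k`-th rook number `r_k(B)`: the number of placements of `k` cells of the board,
no two in the same row or column. -/
def rookNum (n : ℕ) (b : ℕ → ℕ) (k : ℕ) : ℕ :=
  ((cellFinset n b).powerset.filter fun P =>
    P.card = k ∧ ∀ p ∈ P, ∀ q ∈ P, p ≠ q → p.1 ≠ q.1 ∧ p.2 ≠ q.2).card

/-- The (0-indexed) level of the (1-indexed) row `j`: level `t` (0-indexed) consists of
rows `t*m + 1, …, t*m + m`. -/
def levelOf (m j : ℕ) : ℕ := (j - 1) / m

/-- The `k`-th `m`-level rook number `r_{k,m}(B)`: the number of placements of `k` cells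
of the board, no two in the same column or in the same level. -/
def mLevelRookNum (m n : ℕ) (b : ℕ → ℕ) (k : ℕ) : ℕ :=
  ((cellFinset n b).powerset.filter fun P =>
    P.card = k ∧ ∀ p ∈ P, ∀ q ∈ P, p ≠ q →
      p.1 ≠ q.1 ∧ levelOf m p.2 ≠ levelOf m q.2).card

/-- A placement has no two cells in the same level. -/
def NoLevelRepeat (m : ℕ) (F : Finset (ℕ × ℕ)) : Prop :=
  ∀ p ∈ F, ∀ q ∈ F, p ≠ q → levelOf m p.2 ≠ levelOf m q.2

/-- The `m`-weight of a file placement `F`: the product over all rows `j` of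
`1↓_{f_j, m}` where `f_j` is the number of cells of `F` in row `j`.  (Rows containing
no cell of `F` contribute `1↓_{0,m} = 1`, so it suffices to take the product over the
rows meeting `F`.) -/
noncomputable def wtm (m : ℕ) (F : Finset (ℕ × ℕ)) : ℝ :=
  ∏ j ∈ F.image Prod.snd, mfall 1 m ((F.filter fun p => p.2 = j).card)

/-- The `k`-th `m`-weighted file placement number `f_{k,m}(B)`. -/
noncomputable def fWeightNum (m n : ℕ) (b : ℕ → ℕ) (k : ℕ) : ℝ :=
  ∑ F ∈ filePlacements n b k, wtm m F

/-- The `m`-floor of `b`: the largest multiple of `m` that is at most `b`. -/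
def mfloor (m b : ℕ) : ℕ := m * (b / m)

/-- A singleton board (w.r.t. `m`): a Ferrers board such that whenever column `i` has
nonzero remainder mod `m`, the `m`-floor strictly increases at the next column. -/
def IsSingletonBoard (m n : ℕ) (b : ℕ → ℕ) : Prop :=
  FerrersMono n b ∧ ∀ i, i + 1 < n → b i - mfloor m (b i) ≠ 0 →
    mfloor m (b i) < mfloor m (b (i + 1))

/-- The cells of `F` lying in level `l` (0-indexed). -/
def rooksInLevel (m : ℕ) (F : Finset (ℕ × ℕ)) (l : ℕ) : Finset (ℕ × ℕ) :=
  F.filter fun p => levelOf m p.2 = l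

/-- `l` is the distinguished level of `F`: it contains at least two cells of `F`,
it has the fewest cells among all levels containing at least two cells of `F`,
and it is the lowest such level (any lower level with at least two cells of `F`
contains strictly more of them). -/
def DistinguishedLevel (m : ℕ) (F : Finset (ℕ × ℕ)) (l : ℕ) : Prop :=
  2 ≤ (rooksInLevel m F l).card ∧
  (∀ l', 2 ≤ (rooksInLevel m F l').card →
    (rooksInLevel m F l).card ≤ (rooksInLevel m F l').card) ∧
  (∀ l' < l, 2 ≤ (rooksInLevel m F l').card →
    (rooksInLevel m F l).card < (rooksInLevel m F l').card)

/-- The class `𝓟(F₀)` of a file placement `F₀` with distinguished level `l`: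
all file placements on the board with the same number of rooks as `F₀` which agree
with `F₀` outside level `l`, whose rooks in level `l` occupy the same columns as those
of `F₀`, and whose leftmost rook in level `l` occupies the same cell as the leftmost
rook of `F₀` in level `l`. -/
def classOf (m n : ℕ) (b : ℕ → ℕ) (l : ℕ) (F₀ : Finset (ℕ × ℕ)) :
    Finset (Finset (ℕ × ℕ)) :=
  (filePlacements n b F₀.card).filter fun F =>
    (F.filter fun p => levelOf m p.2 ≠ l) = (F₀.filter fun p => levelOf m p.2 ≠ l) ∧
    (rooksInLevel m F l).image Prod.fst = (rooksInLevel m F₀ l).image Prod.fst ∧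
    ∀ p ∈ rooksInLevel m F l, (∀ q ∈ rooksInLevel m F l, p.1 ≤ q.1) → p ∈ F₀

namespace S7


lemma mfall_zero (x : ℝ) (m : ℕ) : mfall x m 0 = 1 := by simp [mfall]

lemma mfall_one (m : ℕ) : mfall 1 m 1 = 1 := by simp [mfall]

lemma mfall_succ (m f : ℕ) : mfall 1 m (f + 1) = mfall 1 m f * (1 - (m : ℝ) * f) := by
  simp [mfall, Finset.prod_range_succ]

/-- count of columns mapped to row `t` -/
noncomputable def cnt (C : Finset ℕ) (g : ∀ a ∈ C, ℕ) (t : ℕ) : ℕ :=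
  ∑ c ∈ C.attach, if g c.1 c.2 = t then 1 else 0

lemma cnt_cons {C : Finset ℕ} {a : ℕ} (ha : a ∉ C) (b : ℕ) (g : ∀ a ∈ C, ℕ) (t : ℕ) :
    cnt (insert a C) (Finset.Pi.cons C a b g) t
      = cnt C g t + (if b = t then 1 else 0) := by
  unfold cnt
  rw [Finset.attach_insert, Finset.sum_insert, Finset.sum_image]
  · rw [Finset.Pi.cons_same]
    have : ∀ (x : {x // x ∈ C}),
        Finset.Pi.cons C a b g x.1 (Finset.mem_insert_of_mem x.2) = g x.1 x.2 := by
      intro x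
      exact Finset.Pi.cons_ne (by rintro rfl; exact ha x.2)
    rw [Finset.sum_congr rfl (fun x _ => by rw [this x])]
    ring
  · intro x _ y _ h
    exact Subtype.ext (by simpa using congrArg Subtype.val h)
  · simp only [Finset.mem_image, not_exists]
    rintro ⟨x, hx⟩ h
    apply ha
    obtain ⟨-, h2⟩ := h
    have := congrArg Subtype.val h2
    simp only at this
    rwa [this] at hx

lemma sum_cnt {R C : Finset ℕ} {g : ∀ a ∈ C, ℕ} (hg : g ∈ C.pi fun _ => R) :
    ∑ t ∈ R, cnt C g t = C.card := by
  unfold cnt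
  rw [Finset.sum_comm]
  rw [Finset.mem_pi] at hg
  have : ∀ c ∈ C.attach, (∑ t ∈ R, if g c.1 c.2 = t then 1 else 0) = 1 := by
    intro c _
    rw [Finset.sum_ite_eq R (g c.1 c.2) (fun _ => 1)]
    simp [hg c.1 c.2]
  rw [Finset.sum_congr rfl this]
  simp

lemma prod_delta {R : Finset ℕ} {bb : ℕ} (hb : bb ∈ R) (u : ℕ → ℕ) (m : ℕ) :
    (∏ t ∈ R, mfall 1 m (u t + if bb = t then 1 else 0))
      = (1 - (m : ℝ) * u bb) * ∏ t ∈ R, mfall 1 m (u t) := by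
  rw [← Finset.mul_prod_erase R _ hb, ← Finset.mul_prod_erase R (fun t => mfall 1 m (u t)) hb]
  have h1 : ∀ t ∈ R.erase bb, mfall 1 m (u t + if bb = t then 1 else 0) = mfall 1 m (u t) := by
    intro t ht
    rw [if_neg (Ne.symm (Finset.ne_of_mem_erase ht)), Nat.add_zero]
  rw [Finset.prod_congr rfl h1, if_pos rfl, mfall_succ]
  ring

lemma lemRec (m : ℕ) (R : Finset ℕ) (hR : R.card = m) (h : ℕ → ℕ) (C : Finset ℕ)
    (a : ℕ) (ha : a ∉ C) :
    ∑ g ∈ (insert a C).pi (fun _ => R), ∏ t ∈ R, mfall 1 m (cnt (insert a C) g t + h t)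
      = ((m : ℝ) - m * (C.card + ∑ t ∈ R, h t)) *
        ∑ g ∈ C.pi (fun _ => R), ∏ t ∈ R, mfall 1 m (cnt C g t + h t) := by
  rw [Finset.pi_insert ha, Finset.sum_biUnion]
  · have step : ∀ bb ∈ R,
        (∑ g ∈ (C.pi fun _ => R).image (Finset.Pi.cons C a bb),
          ∏ t ∈ R, mfall 1 m (cnt (insert a C) g t + h t))
        = ∑ g ∈ C.pi (fun _ => R),
            (1 - (m:ℝ) * (cnt C g bb + h bb)) * ∏ t ∈ R, mfall 1 m (cnt C g t + h t) := by
      intro bb hbb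
      rw [Finset.sum_image (fun x _ y _ hxy => Finset.Pi.cons_injective ha hxy)]
      apply Finset.sum_congr rfl
      intro g hg
      have e1 : ∀ t, cnt (insert a C) (Finset.Pi.cons C a bb g) t + h t
          = (cnt C g t + h t) + (if bb = t then 1 else 0) := by
        intro t; rw [cnt_cons ha]; ring
      calc (∏ t ∈ R, mfall 1 m (cnt (insert a C) (Finset.Pi.cons C a bb g) t + h t))
          = ∏ t ∈ R, mfall 1 m ((cnt C g t + h t) + if bb = t then 1 else 0) := by
            exact Finset.prod_congr rfl (fun t _ => by rw [e1 t])
        _ = (1 - (m:ℝ) * (cnt C g bb + h bb)) * ∏ t ∈ R, mfall 1 m (cnt C g t + h t) := by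
            rw [prod_delta hbb (fun t => cnt C g t + h t) m]; push_cast; ring
    rw [Finset.sum_congr rfl step, Finset.sum_comm, Finset.mul_sum]
    apply Finset.sum_congr rfl
    intro g hg
    rw [← Finset.sum_mul]
    congr 1
    have e2 : (∑ x ∈ R, ((1:ℝ) - ↑m * (↑(cnt C g x) + ↑(h x))))
        = (R.card : ℝ) - m * ((∑ x ∈ R, (cnt C g x : ℝ)) + ∑ x ∈ R, (h x : ℝ)) := by
      rw [Finset.sum_sub_distrib]
      simp [Finset.mul_sum, Finset.sum_add_distrib, mul_add]
    rw [e2, hR]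
    have e3 : (∑ x ∈ R, (cnt C g x : ℝ)) = (C.card : ℝ) := by
      rw [← Nat.cast_sum, sum_cnt hg]
    rw [e3]
    push_cast
    ring
  · -- pairwise disjoint
    intro x hx y hy hxy
    simp only [Finset.disjoint_left, Finset.mem_image]
    rintro gg ⟨g1, hg1, rfl⟩ ⟨g2, hg2, he⟩
    apply hxy
    have := congrFun (congrFun he a) (Finset.mem_insert_self a C)
    rw [Finset.Pi.cons_same, Finset.Pi.cons_same] at this
    exact this.symm

lemma lemA (m : ℕ) (R : Finset ℕ) (hR : R.card = m) (h : ℕ → ℕ)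
    (hh : ∑ t ∈ R, h t = 1) (C : Finset ℕ) (hC : C.Nonempty) :
    ∑ g ∈ C.pi (fun _ => R), ∏ t ∈ R, mfall 1 m (cnt C g t + h t) = 0 := by
  induction hC using Finset.Nonempty.cons_induction with
  | singleton a =>
      have : ({a} : Finset ℕ) = insert a ∅ := rfl
      rw [this, lemRec m R hR h ∅ a (Finset.notMem_empty a)]
      simp [hh]
  | cons a s ha hs ih =>
      rw [Finset.cons_eq_insert, lemRec m R hR h s a ha, ih]
      ring


def Rset (m l : ℕ) : Finset ℕ := Finset.Icc (l*m+1) ((l+1)*m)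

lemma card_Rset (m l : ℕ) : (Rset m l).card = m := by
  rw [Rset, Nat.card_Icc]
  have : (l+1)*m = l*m+m := by ring
  omega

lemma mem_Rset {m : ℕ} (hm : 0 < m) {l r : ℕ} :
    r ∈ Rset m l ↔ 1 ≤ r ∧ levelOf m r = l := by
  unfold Rset levelOf
  rw [Finset.mem_Icc]
  have hmul : (l+1)*m = m*l + m := by ring
  have hml : l*m = m*l := by ring
  constructor
  · rintro ⟨h1, h2⟩
    refine ⟨by omega, ?_⟩
    have e : r - 1 = m * l + (r - 1 - m*l) := by omega
    rw [e, Nat.mul_add_div hm]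
    have : (r - 1 - m*l)/m = 0 := Nat.div_eq_of_lt (by omega)
    omega
  · rintro ⟨h1, h2⟩
    have hd := Nat.div_add_mod (r-1) m
    have hm2 := Nat.mod_lt (r-1) hm
    rw [h2] at hd
    omega

lemma mem_cell {n : ℕ} {b : ℕ → ℕ} {p : ℕ × ℕ} :
    p ∈ cellFinset n b ↔ p.1 < n ∧ 1 ≤ p.2 ∧ p.2 ≤ b p.1 := by
  unfold cellFinset
  simp only [Finset.mem_filter, Finset.mem_product, Finset.mem_range, Finset.mem_Icc]
  constructor
  · rintro ⟨⟨h1, h2, h3⟩, h4⟩; exact ⟨h1, h2, h4⟩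
  · rintro ⟨h1, h2, h3⟩
    exact ⟨⟨h1, h2, le_trans h3 (Finset.le_sup (Finset.mem_range.2 h1))⟩, h3⟩

lemma mem_FP {n k : ℕ} {b : ℕ → ℕ} {F : Finset (ℕ × ℕ)} :
    F ∈ filePlacements n b k ↔
      F ⊆ cellFinset n b ∧ F.card = k ∧ ∀ p ∈ F, ∀ q ∈ F, p ≠ q → p.1 ≠ q.1 := by
  simp [filePlacements, and_assoc]

lemma col_inj {n k : ℕ} {b : ℕ → ℕ} {F : Finset (ℕ × ℕ)}
    (hF : F ∈ filePlacements n b k) {p q : ℕ × ℕ} (hp : p ∈ F) (hq : q ∈ F)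
    (h : p.1 = q.1) : p = q := by
  by_contra hne
  exact (mem_FP.1 hF).2.2 p hp q hq hne h

lemma mono {n : ℕ} {b : ℕ → ℕ} (hB : FerrersMono n b) :
    ∀ {i j : ℕ}, i ≤ j → j < n → b i ≤ b j := by
  intro i j
  induction j with
  | zero => intro hij _; rw [Nat.le_zero.1 hij]
  | succ j ih =>
      intro hij hj
      rcases Nat.eq_or_lt_of_le hij with rfl | hlt
      · exact le_rfl
      · exact le_trans (ih (by omega) (by omega)) (hB j hj)

lemma full {m n k : ℕ} {b : ℕ → ℕ} (hm : 0 < m) (hB : IsSingletonBoard m n b)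
    {F : Finset (ℕ × ℕ)} (hF : F ∈ filePlacements n b k)
    {l c i jc ri : ℕ} (hcl : (c, jc) ∈ F) (hjc : levelOf m jc = l)
    (hil : (i, ri) ∈ F) (hri : levelOf m ri = l) (hci : c < i) : (l+1)*m ≤ b i := by
  by_contra hlt
  push_neg at hlt
  have hsub := (mem_FP.1 hF).1
  have hc := mem_cell.1 (hsub hcl)
  have hi := mem_cell.1 (hsub hil)
  simp only at hc hi
  have hjcR : jc ∈ Rset m l := (mem_Rset hm).2 ⟨hc.2.1, hjc⟩
  rw [Rset, Finset.mem_Icc] at hjcR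
  have hbc : l*m+1 ≤ b c := le_trans hjcR.1 hc.2.2
  have h1 : b c ≤ b (i-1) := mono hB.1 (by omega) (by omega)
  have h2 : b (i-1) ≤ b i := mono hB.1 (by omega) hi.1
  have hdiv : b (i-1) / m = l := by
    apply Nat.div_eq_of_lt_le
    · have : l * m ≤ b (i-1) := by omega
      linarith [this]
    · omega
  have hne : b (i-1) - mfloor m (b (i-1)) ≠ 0 := by
    rw [mfloor, hdiv]
    have : m * l = l * m := by ring
    omega
  have hsing := hB.2 (i-1) (by omega) hne
  rw [mfloor, hdiv] at hsing
  have hieq : i - 1 + 1 = i := by omega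
  rw [hieq] at hsing
  rw [mfloor] at hsing
  have hlt2 : l < b i / m := lt_of_mul_lt_mul_left hsing (Nat.zero_le m)
  have : (l+1) * m ≤ (b i / m) * m := Nat.mul_le_mul_right m hlt2
  have h3 : (b i / m) * m ≤ b i := Nat.div_mul_le_self _ _
  omega

noncomputable def lvF (m : ℕ) (F : Finset (ℕ × ℕ)) : ℕ :=
  sInf {l | 2 ≤ (rooksInLevel m F l).card}

noncomputable def c0 (m : ℕ) (F : Finset (ℕ × ℕ)) : ℕ :=
  sInf {i | ∃ r, (i, r) ∈ rooksInLevel m F (lvF m F)}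

noncomputable def j0 (m : ℕ) (F : Finset (ℕ × ℕ)) : ℕ :=
  sInf {r | (c0 m F, r) ∈ F}

noncomputable def outF (m : ℕ) (F : Finset (ℕ × ℕ)) : Finset (ℕ × ℕ) :=
  F.filter fun p => levelOf m p.2 ≠ lvF m F

noncomputable def keyF (m : ℕ) (F : Finset (ℕ × ℕ)) :
    ℕ × ℕ × ℕ × Finset ℕ × Finset (ℕ × ℕ) :=
  (lvF m F, c0 m F, j0 m F, (rooksInLevel m F (lvF m F)).image Prod.fst, outF m F)

lemma mem_rooksInLevel {m l : ℕ} {F : Finset (ℕ × ℕ)} {p : ℕ × ℕ} :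
    p ∈ rooksInLevel m F l ↔ p ∈ F ∧ levelOf m p.2 = l := by
  simp [rooksInLevel]

lemma lv_spec {m : ℕ} {F : Finset (ℕ × ℕ)} (hN : ¬ NoLevelRepeat m F) :
    2 ≤ (rooksInLevel m F (lvF m F)).card := by
  have hne : {l | 2 ≤ (rooksInLevel m F l).card}.Nonempty := by
    unfold NoLevelRepeat at hN
    push_neg at hN
    obtain ⟨p, hp, q, hq, hpq, hl⟩ := hN
    refine ⟨levelOf m p.2, ?_⟩
    have : 1 < (rooksInLevel m F (levelOf m p.2)).card := by
      apply Finset.one_lt_card.2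
      exact ⟨p, mem_rooksInLevel.2 ⟨hp, rfl⟩, q, mem_rooksInLevel.2 ⟨hq, hl.symm⟩, hpq⟩
    exact this
  exact Nat.sInf_mem hne

lemma c0_spec {m : ℕ} {F : Finset (ℕ × ℕ)} (hN : ¬ NoLevelRepeat m F) :
    ∃ r, (c0 m F, r) ∈ rooksInLevel m F (lvF m F) := by
  have h2 := lv_spec hN
  have hne : {i | ∃ r, (i, r) ∈ rooksInLevel m F (lvF m F)}.Nonempty := by
    have : (rooksInLevel m F (lvF m F)).Nonempty := Finset.card_pos.1 (by omega)
    obtain ⟨p, hp⟩ := this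
    exact ⟨p.1, p.2, by simpa using hp⟩
  exact Nat.sInf_mem hne

lemma c0_min {m : ℕ} {F : Finset (ℕ × ℕ)} {p : ℕ × ℕ}
    (hp : p ∈ rooksInLevel m F (lvF m F)) : c0 m F ≤ p.1 :=
  Nat.sInf_le ⟨p.2, by simpa using hp⟩

lemma rowAt_spec {n k : ℕ} {b : ℕ → ℕ} {F : Finset (ℕ × ℕ)}
    (hF : F ∈ filePlacements n b k) {i : ℕ} (hi : ∃ r, (i, r) ∈ F) :
    (i, sInf {r | (i, r) ∈ F}) ∈ F ∧ ∀ r, (i, r) ∈ F → r = sInf {r | (i, r) ∈ F} := by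
  have h1 : (i, sInf {r | (i, r) ∈ F}) ∈ F := Nat.sInf_mem hi
  refine ⟨h1, fun r hr => congrArg Prod.snd (col_inj hF hr h1 rfl)⟩

lemma j0_spec {m n k : ℕ} {b : ℕ → ℕ} {F : Finset (ℕ × ℕ)}
    (hF : F ∈ filePlacements n b k) (hN : ¬ NoLevelRepeat m F) :
    (c0 m F, j0 m F) ∈ F ∧ levelOf m (j0 m F) = lvF m F := by
  obtain ⟨r, hr⟩ := c0_spec hN
  have hrF : (c0 m F, r) ∈ F := (mem_rooksInLevel.1 hr).1
  have := rowAt_spec hF ⟨r, hrF⟩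
  have hj0 : (c0 m F, j0 m F) ∈ F := this.1
  have : r = j0 m F := this.2 r hrF
  refine ⟨hj0, ?_⟩
  rw [← this]
  exact (mem_rooksInLevel.1 hr).2

noncomputable def phi (Out : Finset (ℕ × ℕ)) (c j : ℕ) (C' : Finset ℕ)
    (g : ∀ a ∈ C', ℕ) : Finset (ℕ × ℕ) :=
  Out ∪ insert (c, j) (C'.attach.image fun i => (i.1, g i.1 i.2))

noncomputable def psi (C' : Finset ℕ) (F : Finset (ℕ × ℕ)) : ∀ a ∈ C', ℕ :=
  fun i _ => sInf {r | (i, r) ∈ F}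

lemma mem_phi {Out : Finset (ℕ × ℕ)} {c j : ℕ} {C' : Finset ℕ}
    {g : ∀ a ∈ C', ℕ} {p : ℕ × ℕ} :
    p ∈ phi Out c j C' g ↔ p ∈ Out ∨ p = (c, j) ∨ ∃ a, ∃ h : a ∈ C', p = (a, g a h) := by
  simp only [phi, Finset.mem_union, Finset.mem_insert, Finset.mem_image, Finset.mem_attach,
    true_and, Subtype.exists]
  constructor
  · rintro (h | h | ⟨a, ha, he⟩)
    · exact Or.inl h
    · exact Or.inr (Or.inl h)
    · exact Or.inr (Or.inr ⟨a, ha, he.symm⟩)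
  · rintro (h | h | ⟨a, ha, he⟩)
    · exact Or.inl h
    · exact Or.inr (Or.inl h)
    · exact Or.inr (Or.inr ⟨a, ha, he.symm⟩)

section Fiber

variable {m n k : ℕ} {b : ℕ → ℕ} {F₀ : Finset (ℕ × ℕ)}

/-- Columns of the distinguished-level rooks. -/
noncomputable def ColsF (m : ℕ) (F : Finset (ℕ × ℕ)) : Finset ℕ :=
  (rooksInLevel m F (lvF m F)).image Prod.fst

/-- The free columns. -/
noncomputable def CpF (m : ℕ) (F : Finset (ℕ × ℕ)) : Finset ℕ :=
  (ColsF m F).erase (c0 m F)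

lemma cols_card (hF₀ : F₀ ∈ filePlacements n b k) :
    (ColsF m F₀).card = (rooksInLevel m F₀ (lvF m F₀)).card := by
  apply Finset.card_image_of_injOn
  intro p hp q hq hpq
  exact col_inj hF₀ (Finset.filter_subset _ _ hp) (Finset.filter_subset _ _ hq) hpq

lemma c0_mem_cols (hN₀ : ¬ NoLevelRepeat m F₀) : c0 m F₀ ∈ ColsF m F₀ := by
  obtain ⟨r, hr⟩ := c0_spec hN₀
  exact Finset.mem_image.2 ⟨(c0 m F₀, r), hr, rfl⟩

lemma cpf_nonempty (hF₀ : F₀ ∈ filePlacements n b k) (hN₀ : ¬ NoLevelRepeat m F₀) :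
    (CpF m F₀).Nonempty := by
  apply Finset.card_pos.1
  have h1 := Finset.card_erase_of_mem (c0_mem_cols hN₀)
  have h2 := cols_card hF₀ (m := m)
  have h3 := lv_spec hN₀ (m := m) (F := F₀)
  unfold CpF
  omega

lemma cpf_full (hm : 0 < m) (hB : IsSingletonBoard m n b)
    (hF₀ : F₀ ∈ filePlacements n b k) (hN₀ : ¬ NoLevelRepeat m F₀) :
    ∀ i ∈ CpF m F₀, (lvF m F₀ + 1) * m ≤ b i ∧ i < n := by
  intro i hi
  obtain ⟨hic, hiC⟩ := Finset.mem_erase.1 hi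
  obtain ⟨p, hp, hpi⟩ := Finset.mem_image.1 hiC
  have hpF : p ∈ F₀ := (mem_rooksInLevel.1 hp).1
  have hplev : levelOf m p.2 = lvF m F₀ := (mem_rooksInLevel.1 hp).2
  have hcle : c0 m F₀ ≤ p.1 := c0_min hp
  have hci : c0 m F₀ < i := by rw [hpi] at hcle; omega
  have hcj := j0_spec hF₀ hN₀
  have hpi' : (i, p.2) ∈ F₀ := by rw [← hpi]; exact hpF
  have hcell := mem_cell.1 ((mem_FP.1 hF₀).1 hpF)
  refine ⟨full hm hB hF₀ hcj.1 hcj.2 hpi' hplev hci, ?_⟩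
  rw [← hpi]; exact hcell.1

lemma out_col (hF₀ : F₀ ∈ filePlacements n b k) :
    ∀ p ∈ outF m F₀, p.1 ∉ ColsF m F₀ := by
  intro p hp hmem
  obtain ⟨q, hq, hqp⟩ := Finset.mem_image.1 hmem
  obtain ⟨hpF, hplev⟩ := Finset.mem_filter.1 hp
  obtain ⟨hqF, hqlev⟩ := mem_rooksInLevel.1 hq
  have : p = q := col_inj hF₀ hpF hqF hqp.symm
  rw [this] at hplev
  exact hplev hqlev

lemma j_mem_R (hm : 0 < m) (hF₀ : F₀ ∈ filePlacements n b k) (hN₀ : ¬ NoLevelRepeat m F₀) :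
    j0 m F₀ ∈ Rset m (lvF m F₀) := by
  have hcj := j0_spec hF₀ hN₀
  have hcell := mem_cell.1 ((mem_FP.1 hF₀).1 hcj.1)
  exact (mem_Rset hm).2 ⟨hcell.2.1, hcj.2⟩

/-- All cells of the level part of `phi` have level `lvF m F₀` and are cells of the board. -/
lemma phi_new_good (hm : 0 < m) (hB : IsSingletonBoard m n b)
    (hF₀ : F₀ ∈ filePlacements n b k) (hN₀ : ¬ NoLevelRepeat m F₀)
    {g : ∀ a ∈ CpF m F₀, ℕ} (hg : g ∈ (CpF m F₀).pi (fun _ => Rset m (lvF m F₀))) :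
    ∀ i (hi : i ∈ CpF m F₀),
      levelOf m (g i hi) = lvF m F₀ ∧ 1 ≤ g i hi ∧ (i, g i hi) ∈ cellFinset n b := by
  intro i hi
  have hgR : g i hi ∈ Rset m (lvF m F₀) := Finset.mem_pi.1 hg i hi
  have h1 := (mem_Rset hm).1 hgR
  have h2 := cpf_full hm hB hF₀ hN₀ i hi
  refine ⟨h1.2, h1.1, mem_cell.2 ⟨h2.2, h1.1, ?_⟩⟩
  show g i hi ≤ b i
  rw [Rset, Finset.mem_Icc] at hgR
  omega

/-- Column-injectivity for `phi`. -/
lemma colinj_phi (hF₀ : F₀ ∈ filePlacements n b k) (hN₀ : ¬ NoLevelRepeat m F₀)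
    {g : ∀ a ∈ CpF m F₀, ℕ} {p q : ℕ × ℕ}
    (hp : p ∈ phi (outF m F₀) (c0 m F₀) (j0 m F₀) (CpF m F₀) g)
    (hq : q ∈ phi (outF m F₀) (c0 m F₀) (j0 m F₀) (CpF m F₀) g)
    (hpq : p.1 = q.1) : p = q := by
  have hcC : c0 m F₀ ∉ CpF m F₀ := Finset.notMem_erase _ _
  have hCcols : CpF m F₀ ⊆ ColsF m F₀ := Finset.erase_subset _ _
  rw [mem_phi] at hp hq
  rcases hp with hp | hp | ⟨a, ha, hpe⟩ <;> rcases hq with hq | hq | ⟨a', ha', hqe⟩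
  · exact col_inj hF₀ (Finset.filter_subset _ _ hp) (Finset.filter_subset _ _ hq) hpq
  · exfalso; apply out_col hF₀ p hp; rw [hpq, hq]; exact c0_mem_cols hN₀
  · exfalso; apply out_col hF₀ p hp; rw [hpq, hqe]; exact hCcols ha'
  · exfalso; apply out_col hF₀ q hq; rw [← hpq, hp]; exact c0_mem_cols hN₀
  · rw [hp, hq]
  · exfalso; apply hcC
    have hca : c0 m F₀ = a' := by rw [hp, hqe] at hpq; exact hpq
    rw [hca]; exact ha'
  · exfalso; apply out_col hF₀ q hq; rw [← hpq, hpe]; exact hCcols ha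
  · exfalso; apply hcC
    have hca : c0 m F₀ = a := by rw [hq, hpe] at hpq; exact hpq.symm
    rw [hca]; exact ha
  · have haa : a = a' := by rw [hpe, hqe] at hpq; exact hpq
    subst haa
    rw [hpe, hqe]

lemma mem_Ng {C' : Finset ℕ} {g : ∀ a ∈ C', ℕ} {p : ℕ × ℕ} :
    p ∈ C'.attach.image (fun i => (i.1, g i.1 i.2)) ↔ ∃ a, ∃ h : a ∈ C', p = (a, g a h) := by
  simp only [Finset.mem_image, Finset.mem_attach, true_and, Subtype.exists]
  constructor
  · rintro ⟨a, ha, he⟩; exact ⟨a, ha, he.symm⟩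
  · rintro ⟨a, ha, he⟩; exact ⟨a, ha, he.symm⟩

lemma Ng_card {C' : Finset ℕ} (g : ∀ a ∈ C', ℕ) :
    (C'.attach.image (fun i => (i.1, g i.1 i.2))).card = C'.card := by
  rw [Finset.card_image_of_injOn, Finset.card_attach]
  intro x _ y _ h
  exact Subtype.ext (congrArg Prod.fst h)

lemma Ng_fst {C' : Finset ℕ} (g : ∀ a ∈ C', ℕ) :
    (C'.attach.image (fun i => (i.1, g i.1 i.2))).image Prod.fst = C' := by
  ext i
  simp only [Finset.image_image, Finset.mem_image, Finset.mem_attach, true_and, Subtype.exists]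
  constructor
  · rintro ⟨a, ha, he⟩; simpa [← he] using ha
  · intro hi; exact ⟨i, hi, rfl⟩

lemma cj_notMem_Ng {g : ∀ a ∈ CpF m F₀, ℕ} :
    (c0 m F₀, j0 m F₀) ∉ (CpF m F₀).attach.image (fun i => (i.1, g i.1 i.2)) := by
  rw [mem_Ng]
  rintro ⟨a, ha, he⟩
  have : c0 m F₀ = a := congrArg Prod.fst he
  exact Finset.notMem_erase _ _ (this ▸ ha)

lemma phi_filter_ne (hm : 0 < m) (hB : IsSingletonBoard m n b)
    (hF₀ : F₀ ∈ filePlacements n b k) (hN₀ : ¬ NoLevelRepeat m F₀)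
    {g : ∀ a ∈ CpF m F₀, ℕ} (hg : g ∈ (CpF m F₀).pi (fun _ => Rset m (lvF m F₀))) :
    (phi (outF m F₀) (c0 m F₀) (j0 m F₀) (CpF m F₀) g).filter
      (fun p => levelOf m p.2 ≠ lvF m F₀) = outF m F₀ := by
  ext p
  rw [Finset.mem_filter, mem_phi]
  constructor
  · rintro ⟨hp | hp | ⟨a, ha, he⟩, hlev⟩
    · exact hp
    · exfalso; apply hlev; rw [hp]; exact (j0_spec hF₀ hN₀).2
    · exfalso; apply hlev; rw [he]; exact (phi_new_good hm hB hF₀ hN₀ hg a ha).1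
  · intro hp
    exact ⟨Or.inl hp, (Finset.mem_filter.1 hp).2⟩

lemma phi_rooks_l (hm : 0 < m) (hB : IsSingletonBoard m n b)
    (hF₀ : F₀ ∈ filePlacements n b k) (hN₀ : ¬ NoLevelRepeat m F₀)
    {g : ∀ a ∈ CpF m F₀, ℕ} (hg : g ∈ (CpF m F₀).pi (fun _ => Rset m (lvF m F₀))) :
    rooksInLevel m (phi (outF m F₀) (c0 m F₀) (j0 m F₀) (CpF m F₀) g) (lvF m F₀)
      = insert (c0 m F₀, j0 m F₀) ((CpF m F₀).attach.image (fun i => (i.1, g i.1 i.2))) := by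
  ext p
  rw [mem_rooksInLevel, mem_phi, Finset.mem_insert, mem_Ng]
  constructor
  · rintro ⟨hp | hp | ⟨a, ha, he⟩, hlev⟩
    · exfalso; exact (Finset.mem_filter.1 hp).2 hlev
    · exact Or.inl hp
    · exact Or.inr ⟨a, ha, he⟩
  · rintro (hp | ⟨a, ha, he⟩)
    · exact ⟨Or.inr (Or.inl hp), by rw [hp]; exact (j0_spec hF₀ hN₀).2⟩
    · exact ⟨Or.inr (Or.inr ⟨a, ha, he⟩), by rw [he]; exact (phi_new_good hm hB hF₀ hN₀ hg a ha).1⟩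

lemma phi_rooks_ne (hm : 0 < m) (hB : IsSingletonBoard m n b)
    (hF₀ : F₀ ∈ filePlacements n b k) (hN₀ : ¬ NoLevelRepeat m F₀)
    {g : ∀ a ∈ CpF m F₀, ℕ} (hg : g ∈ (CpF m F₀).pi (fun _ => Rset m (lvF m F₀)))
    {l' : ℕ} (hl' : l' ≠ lvF m F₀) :
    rooksInLevel m (phi (outF m F₀) (c0 m F₀) (j0 m F₀) (CpF m F₀) g) l'
      = rooksInLevel m F₀ l' := by
  ext p
  rw [mem_rooksInLevel, mem_rooksInLevel, mem_phi]
  constructor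
  · rintro ⟨hp | hp | ⟨a, ha, he⟩, hlev⟩
    · exact ⟨Finset.filter_subset _ _ hp, hlev⟩
    · exfalso; apply hl'; rw [← hlev, hp]; exact (j0_spec hF₀ hN₀).2
    · exfalso; apply hl'; rw [← hlev, he]; exact (phi_new_good hm hB hF₀ hN₀ hg a ha).1
  · rintro ⟨hp, hlev⟩
    refine ⟨Or.inl (Finset.mem_filter.2 ⟨hp, ?_⟩), hlev⟩
    rw [hlev]; exact hl'

lemma phi_rooks_card (hm : 0 < m) (hB : IsSingletonBoard m n b)
    (hF₀ : F₀ ∈ filePlacements n b k) (hN₀ : ¬ NoLevelRepeat m F₀)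
    {g : ∀ a ∈ CpF m F₀, ℕ} (hg : g ∈ (CpF m F₀).pi (fun _ => Rset m (lvF m F₀)))
    (l' : ℕ) :
    (rooksInLevel m (phi (outF m F₀) (c0 m F₀) (j0 m F₀) (CpF m F₀) g) l').card
      = (rooksInLevel m F₀ l').card := by
  rcases eq_or_ne l' (lvF m F₀) with rfl | hl'
  · rw [phi_rooks_l hm hB hF₀ hN₀ hg, Finset.card_insert_of_notMem cj_notMem_Ng, Ng_card]
    have h1 := cols_card hF₀ (m := m)
    have h2 : (CpF m F₀).card = (ColsF m F₀).card - 1 := by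
      unfold CpF; rw [Finset.card_erase_of_mem (c0_mem_cols hN₀)]
    have h3 := lv_spec hN₀ (m := m) (F := F₀)
    omega
  · rw [phi_rooks_ne hm hB hF₀ hN₀ hg hl']

lemma lvF_phi (hm : 0 < m) (hB : IsSingletonBoard m n b)
    (hF₀ : F₀ ∈ filePlacements n b k) (hN₀ : ¬ NoLevelRepeat m F₀)
    {g : ∀ a ∈ CpF m F₀, ℕ} (hg : g ∈ (CpF m F₀).pi (fun _ => Rset m (lvF m F₀))) :
    lvF m (phi (outF m F₀) (c0 m F₀) (j0 m F₀) (CpF m F₀) g) = lvF m F₀ := by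
  unfold lvF
  congr 1
  ext l'
  simp only [Set.mem_setOf_eq]
  rw [phi_rooks_card hm hB hF₀ hN₀ hg l']

lemma phi_FP (hm : 0 < m) (hB : IsSingletonBoard m n b)
    (hF₀ : F₀ ∈ filePlacements n b k) (hN₀ : ¬ NoLevelRepeat m F₀)
    {g : ∀ a ∈ CpF m F₀, ℕ} (hg : g ∈ (CpF m F₀).pi (fun _ => Rset m (lvF m F₀))) :
    phi (outF m F₀) (c0 m F₀) (j0 m F₀) (CpF m F₀) g ∈ filePlacements n b k := by
  rw [mem_FP]
  refine ⟨?_, ?_, ?_⟩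
  · intro p hp
    rw [mem_phi] at hp
    rcases hp with hp | hp | ⟨a, ha, he⟩
    · exact (mem_FP.1 hF₀).1 (Finset.filter_subset _ _ hp)
    · rw [hp]; exact (mem_FP.1 hF₀).1 (j0_spec hF₀ hN₀).1
    · rw [he]; exact (phi_new_good hm hB hF₀ hN₀ hg a ha).2.2
  · -- cardinality
    have hdisj : Disjoint (outF m F₀)
        (insert (c0 m F₀, j0 m F₀) ((CpF m F₀).attach.image (fun i => (i.1, g i.1 i.2)))) := by
      rw [Finset.disjoint_left]
      intro p hp hp2
      have hlev : levelOf m p.2 ≠ lvF m F₀ := (Finset.mem_filter.1 hp).2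
      rcases Finset.mem_insert.1 hp2 with hp2 | hp2
      · exact hlev (by rw [hp2]; exact (j0_spec hF₀ hN₀).2)
      · obtain ⟨a, ha, he⟩ := mem_Ng.1 hp2
        exact hlev (by rw [he]; exact (phi_new_good hm hB hF₀ hN₀ hg a ha).1)
    rw [phi, Finset.card_union_of_disjoint hdisj,
      Finset.card_insert_of_notMem cj_notMem_Ng, Ng_card]
    have h1 := cols_card hF₀ (m := m)
    have h2 : (CpF m F₀).card = (ColsF m F₀).card - 1 := by
      unfold CpF; rw [Finset.card_erase_of_mem (c0_mem_cols hN₀)]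
    have h3 := lv_spec hN₀ (m := m) (F := F₀)
    have h4 : (outF m F₀).card + (rooksInLevel m F₀ (lvF m F₀)).card = F₀.card := by
      unfold outF rooksInLevel
      rw [add_comm]
      exact Finset.card_filter_add_card_filter_not _
    have h5 : F₀.card = k := (mem_FP.1 hF₀).2.1
    omega
  · intro p hp q hq hpq
    intro hcol
    exact hpq (colinj_phi hF₀ hN₀ hp hq hcol)

lemma phi_notNLR (hm : 0 < m) (hB : IsSingletonBoard m n b)
    (hF₀ : F₀ ∈ filePlacements n b k) (hN₀ : ¬ NoLevelRepeat m F₀)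
    {g : ∀ a ∈ CpF m F₀, ℕ} (hg : g ∈ (CpF m F₀).pi (fun _ => Rset m (lvF m F₀))) :
    ¬ NoLevelRepeat m (phi (outF m F₀) (c0 m F₀) (j0 m F₀) (CpF m F₀) g) := by
  obtain ⟨a, ha⟩ := cpf_nonempty hF₀ hN₀
  intro hNLR
  have hp : (a, g a ha) ∈ phi (outF m F₀) (c0 m F₀) (j0 m F₀) (CpF m F₀) g :=
    mem_phi.2 (Or.inr (Or.inr ⟨a, ha, rfl⟩))
  have hq : (c0 m F₀, j0 m F₀) ∈ phi (outF m F₀) (c0 m F₀) (j0 m F₀) (CpF m F₀) g :=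
    mem_phi.2 (Or.inr (Or.inl rfl))
  have hne : (a, g a ha) ≠ (c0 m F₀, j0 m F₀) := by
    intro h
    have h2 : a = c0 m F₀ := congrArg Prod.fst h
    exact Finset.notMem_erase _ _ (h2 ▸ ha)
  apply hNLR _ hp _ hq hne
  rw [(phi_new_good hm hB hF₀ hN₀ hg a ha).1]
  exact ((j0_spec hF₀ hN₀).2).symm

lemma c0_phi (hm : 0 < m) (hB : IsSingletonBoard m n b)
    (hF₀ : F₀ ∈ filePlacements n b k) (hN₀ : ¬ NoLevelRepeat m F₀)
    {g : ∀ a ∈ CpF m F₀, ℕ} (hg : g ∈ (CpF m F₀).pi (fun _ => Rset m (lvF m F₀))) :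
    c0 m (phi (outF m F₀) (c0 m F₀) (j0 m F₀) (CpF m F₀) g) = c0 m F₀ := by
  have hrfl : c0 m (phi (outF m F₀) (c0 m F₀) (j0 m F₀) (CpF m F₀) g)
      = sInf {i | ∃ r, (i, r) ∈ rooksInLevel m
          (phi (outF m F₀) (c0 m F₀) (j0 m F₀) (CpF m F₀) g)
          (lvF m (phi (outF m F₀) (c0 m F₀) (j0 m F₀) (CpF m F₀) g))} := rfl
  rw [hrfl, lvF_phi hm hB hF₀ hN₀ hg, phi_rooks_l hm hB hF₀ hN₀ hg]
  have hset : {i | ∃ r, (i, r) ∈ insert (c0 m F₀, j0 m F₀)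
      ((CpF m F₀).attach.image (fun i => (i.1, g i.1 i.2)))}
      = {i | ∃ r, (i, r) ∈ rooksInLevel m F₀ (lvF m F₀)} := by
    ext i
    simp only [Set.mem_setOf_eq]
    constructor
    · rintro ⟨r, hr⟩
      rcases Finset.mem_insert.1 hr with hr | hr
      · obtain ⟨r', hr'⟩ := c0_spec hN₀
        have : i = c0 m F₀ := congrArg Prod.fst hr
        exact ⟨r', this ▸ hr'⟩
      · obtain ⟨a, ha, he⟩ := mem_Ng.1 hr
        have hia : i = a := congrArg Prod.fst he
        subst hia
        have hiC : i ∈ ColsF m F₀ := Finset.mem_of_mem_erase ha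
        obtain ⟨p, hp, hpi⟩ := Finset.mem_image.1 hiC
        refine ⟨p.2, ?_⟩
        rw [← hpi]; exact hp
    · rintro ⟨r, hr⟩
      rcases eq_or_ne i (c0 m F₀) with rfl | hic
      · exact ⟨j0 m F₀, Finset.mem_insert_self _ _⟩
      · have hiC : i ∈ CpF m F₀ := Finset.mem_erase.2 ⟨hic, Finset.mem_image.2 ⟨(i, r), hr, rfl⟩⟩
        exact ⟨g i hiC, Finset.mem_insert_of_mem (mem_Ng.2 ⟨i, hiC, rfl⟩)⟩
  rw [hset]
  rfl

lemma j0_phi (hm : 0 < m) (hB : IsSingletonBoard m n b)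
    (hF₀ : F₀ ∈ filePlacements n b k) (hN₀ : ¬ NoLevelRepeat m F₀)
    {g : ∀ a ∈ CpF m F₀, ℕ} (hg : g ∈ (CpF m F₀).pi (fun _ => Rset m (lvF m F₀))) :
    j0 m (phi (outF m F₀) (c0 m F₀) (j0 m F₀) (CpF m F₀) g) = j0 m F₀ := by
  have hrfl : j0 m (phi (outF m F₀) (c0 m F₀) (j0 m F₀) (CpF m F₀) g)
      = sInf {r | (c0 m (phi (outF m F₀) (c0 m F₀) (j0 m F₀) (CpF m F₀) g), r)
          ∈ phi (outF m F₀) (c0 m F₀) (j0 m F₀) (CpF m F₀) g} := rfl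
  rw [hrfl, c0_phi hm hB hF₀ hN₀ hg]
  have hcj : (c0 m F₀, j0 m F₀) ∈ phi (outF m F₀) (c0 m F₀) (j0 m F₀) (CpF m F₀) g :=
    mem_phi.2 (Or.inr (Or.inl rfl))
  have hne : {r | (c0 m F₀, r) ∈ phi (outF m F₀) (c0 m F₀) (j0 m F₀) (CpF m F₀) g}.Nonempty :=
    ⟨j0 m F₀, hcj⟩
  have hmem := Nat.sInf_mem hne
  exact congrArg Prod.snd (colinj_phi hF₀ hN₀ hmem hcj rfl)

lemma keyF_phi (hm : 0 < m) (hB : IsSingletonBoard m n b)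
    (hF₀ : F₀ ∈ filePlacements n b k) (hN₀ : ¬ NoLevelRepeat m F₀)
    {g : ∀ a ∈ CpF m F₀, ℕ} (hg : g ∈ (CpF m F₀).pi (fun _ => Rset m (lvF m F₀))) :
    keyF m (phi (outF m F₀) (c0 m F₀) (j0 m F₀) (CpF m F₀) g) = keyF m F₀ := by
  have hrfl : ∀ X : Finset (ℕ × ℕ), keyF m X
      = (lvF m X, c0 m X, j0 m X, (rooksInLevel m X (lvF m X)).image Prod.fst, outF m X) :=
    fun _ => rfl
  rw [hrfl, hrfl, lvF_phi hm hB hF₀ hN₀ hg, c0_phi hm hB hF₀ hN₀ hg, j0_phi hm hB hF₀ hN₀ hg,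
    phi_rooks_l hm hB hF₀ hN₀ hg]
  have him : (insert (c0 m F₀, j0 m F₀)
      ((CpF m F₀).attach.image (fun i => (i.1, g i.1 i.2)))).image Prod.fst
      = (rooksInLevel m F₀ (lvF m F₀)).image Prod.fst := by
    rw [Finset.image_insert, Ng_fst]
    show insert (c0 m F₀) (CpF m F₀) = ColsF m F₀
    exact Finset.insert_erase (c0_mem_cols hN₀)
  rw [him]
  have hout : outF m (phi (outF m F₀) (c0 m F₀) (j0 m F₀) (CpF m F₀) g) = outF m F₀ := by
    have hrfl2 : outF m (phi (outF m F₀) (c0 m F₀) (j0 m F₀) (CpF m F₀) g)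
        = (phi (outF m F₀) (c0 m F₀) (j0 m F₀) (CpF m F₀) g).filter
            (fun p => levelOf m p.2 ≠ lvF m (phi (outF m F₀) (c0 m F₀) (j0 m F₀) (CpF m F₀) g)) :=
      rfl
    rw [hrfl2, lvF_phi hm hB hF₀ hN₀ hg]
    exact phi_filter_ne hm hB hF₀ hN₀ hg
  rw [hout]

lemma key_unpack {F : Finset (ℕ × ℕ)} (h : keyF m F = keyF m F₀) :
    lvF m F = lvF m F₀ ∧ c0 m F = c0 m F₀ ∧ j0 m F = j0 m F₀ ∧
    (rooksInLevel m F (lvF m F)).image Prod.fst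
      = (rooksInLevel m F₀ (lvF m F₀)).image Prod.fst ∧
    outF m F = outF m F₀ := by
  unfold keyF at h
  simpa [Prod.ext_iff] using h

lemma fiber_inv (hm : 0 < m) {F : Finset (ℕ × ℕ)}
    (hF : F ∈ filePlacements n b k) (hN : ¬ NoLevelRepeat m F)
    (hkey : keyF m F = keyF m F₀) :
    psi (CpF m F₀) F ∈ (CpF m F₀).pi (fun _ => Rset m (lvF m F₀)) ∧
    phi (outF m F₀) (c0 m F₀) (j0 m F₀) (CpF m F₀) (psi (CpF m F₀) F) = F := by
  obtain ⟨e1, e2, e3, e4, e5⟩ := key_unpack hkey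
  have hsub := (mem_FP.1 hF).1
  have hcjF : (c0 m F₀, j0 m F₀) ∈ F := by
    rw [← e2, ← e3]; exact (j0_spec hF hN).1
  have hrow : ∀ i, i ∈ CpF m F₀ →
      (i, sInf {r | (i, r) ∈ F}) ∈ F ∧ levelOf m (sInf {r | (i, r) ∈ F}) = lvF m F₀ := by
    intro i hi
    have hiC : i ∈ (rooksInLevel m F (lvF m F)).image Prod.fst := by
      rw [e4]; exact Finset.mem_of_mem_erase hi
    obtain ⟨p, hp, hpi⟩ := Finset.mem_image.1 hiC
    have hpF : (i, p.2) ∈ F := by rw [← hpi]; exact (mem_rooksInLevel.1 hp).1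
    have hspec := rowAt_spec hF ⟨p.2, hpF⟩
    have heq : p.2 = sInf {r | (i, r) ∈ F} := hspec.2 p.2 hpF
    refine ⟨hspec.1, ?_⟩
    rw [← heq, ← e1]
    exact (mem_rooksInLevel.1 hp).2
  constructor
  · rw [Finset.mem_pi]
    intro i hi
    have h := hrow i hi
    have hcell := mem_cell.1 (hsub h.1)
    exact (mem_Rset hm).2 ⟨hcell.2.1, h.2⟩
  · ext p
    rw [mem_phi]
    constructor
    · rintro (hp | hp | ⟨a, ha, he⟩)
      · rw [← e5] at hp; exact Finset.filter_subset _ _ hp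
      · rw [hp]; exact hcjF
      · rw [he]; exact (hrow a ha).1
    · intro hp
      rcases eq_or_ne (levelOf m p.2) (lvF m F₀) with hl | hl
      · have hpc : p.1 ∈ (rooksInLevel m F (lvF m F)).image Prod.fst := by
          apply Finset.mem_image.2
          exact ⟨p, mem_rooksInLevel.2 ⟨hp, by rw [e1]; exact hl⟩, rfl⟩
        rw [e4] at hpc
        rcases eq_or_ne p.1 (c0 m F₀) with hc | hc
        · refine Or.inr (Or.inl ?_)
          exact col_inj hF hp hcjF hc
        · have hpC : p.1 ∈ CpF m F₀ := Finset.mem_erase.2 ⟨hc, hpc⟩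
          refine Or.inr (Or.inr ⟨p.1, hpC, ?_⟩)
          have hpF2 : (p.1, p.2) ∈ F := hp
          have := (rowAt_spec hF ⟨p.2, hpF2⟩).2 p.2 hpF2
          exact Prod.ext_iff.2 ⟨rfl, this⟩
      · refine Or.inl ?_
        rw [← e5]
        exact Finset.mem_filter.2 ⟨hp, by rw [e1]; exact hl⟩

lemma psi_phi (hF₀ : F₀ ∈ filePlacements n b k) (hN₀ : ¬ NoLevelRepeat m F₀)
    {g : ∀ a ∈ CpF m F₀, ℕ} :
    psi (CpF m F₀) (phi (outF m F₀) (c0 m F₀) (j0 m F₀) (CpF m F₀) g) = g := by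
  funext i hi
  show sInf {r | (i, r) ∈ phi (outF m F₀) (c0 m F₀) (j0 m F₀) (CpF m F₀) g} = g i hi
  have hmem : (i, g i hi) ∈ phi (outF m F₀) (c0 m F₀) (j0 m F₀) (CpF m F₀) g :=
    mem_phi.2 (Or.inr (Or.inr ⟨i, hi, rfl⟩))
  have hs := Nat.sInf_mem (⟨g i hi, hmem⟩ :
    {r | (i, r) ∈ phi (outF m F₀) (c0 m F₀) (j0 m F₀) (CpF m F₀) g}.Nonempty)
  exact congrArg Prod.snd (colinj_phi hF₀ hN₀ hs hmem rfl)

lemma wtm_phi (hm : 0 < m) (hB : IsSingletonBoard m n b)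
    (hF₀ : F₀ ∈ filePlacements n b k) (hN₀ : ¬ NoLevelRepeat m F₀)
    {g : ∀ a ∈ CpF m F₀, ℕ} (hg : g ∈ (CpF m F₀).pi (fun _ => Rset m (lvF m F₀))) :
    wtm m (phi (outF m F₀) (c0 m F₀) (j0 m F₀) (CpF m F₀) g)
      = (∏ r ∈ (outF m F₀).image Prod.snd,
          mfall 1 m (((outF m F₀).filter fun p => p.2 = r).card))
        * ∏ t ∈ Rset m (lvF m F₀),
            mfall 1 m (cnt (CpF m F₀) g t + if t = j0 m F₀ then 1 else 0) := by
  set O := outF m F₀ with hO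
  set P := insert (c0 m F₀, j0 m F₀) ((CpF m F₀).attach.image (fun i => (i.1, g i.1 i.2)))
    with hP
  have hphi : phi (outF m F₀) (c0 m F₀) (j0 m F₀) (CpF m F₀) g = O ∪ P := rfl
  have hlevO : ∀ p ∈ O, levelOf m p.2 ≠ lvF m F₀ := fun p hp => (Finset.mem_filter.1 hp).2
  have hlevP : ∀ p ∈ P, levelOf m p.2 = lvF m F₀ ∧ 1 ≤ p.2 := by
    intro p hp
    rcases Finset.mem_insert.1 hp with hp | hp
    · rw [hp]
      have := j_mem_R hm hF₀ hN₀
      have h2 := (mem_Rset hm).1 this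
      exact ⟨h2.2, h2.1⟩
    · obtain ⟨a, ha, he⟩ := mem_Ng.1 hp
      have := phi_new_good hm hB hF₀ hN₀ hg a ha
      rw [he]
      exact ⟨this.1, this.2.1⟩
  have hPR : ∀ p ∈ P, p.2 ∈ Rset m (lvF m F₀) := by
    intro p hp
    exact (mem_Rset hm).2 ⟨(hlevP p hp).2, (hlevP p hp).1⟩
  have hdisj : Disjoint (O.image Prod.snd) (P.image Prod.snd) := by
    rw [Finset.disjoint_left]
    intro r hr hr'
    obtain ⟨p, hp, rfl⟩ := Finset.mem_image.1 hr
    obtain ⟨q, hq, hqe⟩ := Finset.mem_image.1 hr'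
    exact hlevO p hp (by rw [← hqe]; exact (hlevP q hq).1)
  have hfiltO : ∀ r ∈ O.image Prod.snd,
      ((O ∪ P).filter fun p => p.2 = r) = O.filter fun p => p.2 = r := by
    intro r hr
    obtain ⟨p, hp, rfl⟩ := Finset.mem_image.1 hr
    ext q
    simp only [Finset.mem_filter, Finset.mem_union]
    constructor
    · rintro ⟨hq | hq, hq2⟩
      · exact ⟨hq, hq2⟩
      · exact absurd (by rw [← hq2]; exact (hlevP q hq).1) (hlevO p hp)
    · rintro ⟨hq, hq2⟩; exact ⟨Or.inl hq, hq2⟩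
  have hfiltP : ∀ r ∈ Rset m (lvF m F₀),
      ((O ∪ P).filter fun p => p.2 = r) = P.filter fun p => p.2 = r := by
    intro r hr
    ext q
    simp only [Finset.mem_filter, Finset.mem_union]
    constructor
    · rintro ⟨hq | hq, hq2⟩
      · exfalso
        apply hlevO q hq
        rw [hq2]
        exact ((mem_Rset hm).1 hr).2
      · exact ⟨hq, hq2⟩
    · rintro ⟨hq, hq2⟩; exact ⟨Or.inr hq, hq2⟩
  have hcard : ∀ r ∈ Rset m (lvF m F₀),
      (P.filter fun p => p.2 = r).card
        = cnt (CpF m F₀) g r + if r = j0 m F₀ then 1 else 0 := by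
    intro r _
    have hNgfilt : (((CpF m F₀).attach.image (fun i => (i.1, g i.1 i.2))).filter
        fun p => p.2 = r).card = cnt (CpF m F₀) g r := by
      rw [Finset.filter_image]
      rw [Finset.card_image_of_injOn (fun x _ y _ h => Subtype.ext (congrArg Prod.fst h))]
      unfold cnt
      rw [Finset.card_filter]
    rw [hP, Finset.filter_insert]
    rcases eq_or_ne r (j0 m F₀) with he | he
    · rw [if_pos (by simpa using he.symm), if_pos he,
        Finset.card_insert_of_notMem (fun hc => cj_notMem_Ng (Finset.filter_subset _ _ hc)),
        hNgfilt]
    · rw [if_neg (by simpa using fun hh : j0 m F₀ = r => he hh.symm), if_neg he, hNgfilt]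
      omega
  -- now assemble
  unfold wtm
  rw [hphi, Finset.image_union, Finset.prod_union hdisj]
  congr 1
  · apply Finset.prod_congr rfl
    intro r hr
    rw [hfiltO r hr]
  · have hsub : P.image Prod.snd ⊆ Rset m (lvF m F₀) := by
      intro r hr
      obtain ⟨p, hp, rfl⟩ := Finset.mem_image.1 hr
      exact hPR p hp
    calc (∏ r ∈ P.image Prod.snd, mfall 1 m (((O ∪ P).filter fun p => p.2 = r).card))
        = ∏ r ∈ P.image Prod.snd, mfall 1 m ((P.filter fun p => p.2 = r).card) :=
          Finset.prod_congr rfl (fun r hr => by rw [hfiltP r (hsub hr)])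
      _ = ∏ r ∈ Rset m (lvF m F₀), mfall 1 m ((P.filter fun p => p.2 = r).card) := by
          apply Finset.prod_subset hsub
          intro r hr hr'
          have hempty : (P.filter fun p => p.2 = r) = ∅ := by
            rw [Finset.filter_eq_empty_iff]
            intro p hp hpe
            exact hr' (Finset.mem_image.2 ⟨p, hp, hpe⟩)
          rw [hempty]
          simp [mfall_zero]
      _ = ∏ r ∈ Rset m (lvF m F₀), mfall 1 m (cnt (CpF m F₀) g r
            + if r = j0 m F₀ then 1 else 0) :=
          Finset.prod_congr rfl (fun r hr => by rw [hcard r hr])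

lemma fiber_sum (hm : 0 < m) (hB : IsSingletonBoard m n b)
    (hF₀ : F₀ ∈ filePlacements n b k) (hN₀ : ¬ NoLevelRepeat m F₀) :
    ∑ F ∈ ((filePlacements n b k).filter fun F => ¬ NoLevelRepeat m F).filter
        (fun F => keyF m F = keyF m F₀), wtm m F = 0 := by
  have hmem : ∀ F, F ∈ ((filePlacements n b k).filter fun F => ¬ NoLevelRepeat m F).filter
      (fun F => keyF m F = keyF m F₀) ↔
      F ∈ filePlacements n b k ∧ ¬ NoLevelRepeat m F ∧ keyF m F = keyF m F₀ := by
    intro F; simp [Finset.mem_filter, and_assoc]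
  have hstep : (∑ F ∈ ((filePlacements n b k).filter fun F => ¬ NoLevelRepeat m F).filter
        (fun F => keyF m F = keyF m F₀), wtm m F)
      = ∑ gg ∈ (CpF m F₀).pi (fun _ => Rset m (lvF m F₀)),
          (∏ r ∈ (outF m F₀).image Prod.snd,
            mfall 1 m (((outF m F₀).filter fun p => p.2 = r).card))
          * ∏ t ∈ Rset m (lvF m F₀),
              mfall 1 m (cnt (CpF m F₀) gg t + if t = j0 m F₀ then 1 else 0) := by
    apply Finset.sum_nbij' (i := psi (CpF m F₀))
      (j := phi (outF m F₀) (c0 m F₀) (j0 m F₀) (CpF m F₀))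
    · intro F hF
      obtain ⟨h1, h2, h3⟩ := (hmem F).1 hF
      exact (fiber_inv hm h1 h2 h3).1
    · intro gg hgg
      exact (hmem _).2 ⟨phi_FP hm hB hF₀ hN₀ hgg, phi_notNLR hm hB hF₀ hN₀ hgg,
        keyF_phi hm hB hF₀ hN₀ hgg⟩
    · intro F hF
      obtain ⟨h1, h2, h3⟩ := (hmem F).1 hF
      exact (fiber_inv hm h1 h2 h3).2
    · intro gg hgg
      exact psi_phi hF₀ hN₀
    · intro F hF
      obtain ⟨h1, h2, h3⟩ := (hmem F).1 hF
      conv_lhs => rw [← (fiber_inv hm h1 h2 h3).2]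
      exact wtm_phi hm hB hF₀ hN₀ (fiber_inv hm h1 h2 h3).1
  rw [hstep, ← Finset.mul_sum]
  rw [lemA m (Rset m (lvF m F₀)) (card_Rset m _) _ ?_ _ (cpf_nonempty hF₀ hN₀), mul_zero]
  rw [Finset.sum_ite_eq' (Rset m (lvF m F₀)) (j0 m F₀) (fun _ => 1)]
  rw [if_pos (j_mem_R hm hF₀ hN₀)]

lemma sum_bad (hm : 0 < m) (hB : IsSingletonBoard m n b) (k : ℕ) :
    ∑ F ∈ (filePlacements n b k).filter (fun F => ¬ NoLevelRepeat m F), wtm m F = 0 := by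
  rw [← Finset.sum_fiberwise_of_maps_to (g := keyF m)
    (t := ((filePlacements n b k).filter (fun F => ¬ NoLevelRepeat m F)).image (keyF m))
    (fun F hF => Finset.mem_image_of_mem _ hF) (wtm m)]
  apply Finset.sum_eq_zero
  intro κ hκ
  obtain ⟨F₀, hF₀, rfl⟩ := Finset.mem_image.1 hκ
  obtain ⟨h1, h2⟩ := Finset.mem_filter.1 hF₀
  exact fiber_sum hm hB h1 h2

lemma wtm_good (hm : 0 < m) {F : Finset (ℕ × ℕ)} (hN : NoLevelRepeat m F) :
    wtm m F = 1 := by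
  unfold wtm
  apply Finset.prod_eq_one
  intro r hr
  obtain ⟨p, hp, rfl⟩ := Finset.mem_image.1 hr
  have : (F.filter fun q => q.2 = p.2) = {p} := by
    ext q
    rw [Finset.mem_filter, Finset.mem_singleton]
    constructor
    · rintro ⟨hq, hq2⟩
      by_contra hne
      exact hN q hq p hp hne (by rw [hq2])
    · rintro rfl; exact ⟨hp, rfl⟩
  rw [this, Finset.card_singleton, mfall_one]

end Fiber

end S7

/-- For a singleton board `B` w.r.t. `m` and `0 ≤ k ≤ n`, the sum of
the `m`-weights over all file placements of `k` rooks on `B` that are not `m`-level rook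
placements is zero; equivalently `f_{k,m}(B) = r_{k,m}(B)`. -/


theorem statement7 (m : ℕ) (hm : 0 < m) (n : ℕ) (b : ℕ → ℕ)
    (hB : IsSingletonBoard m n b) (k : ℕ) (hk : k ≤ n) :
    (∑ F ∈ (filePlacements n b k).filter fun F => ¬ NoLevelRepeat m F, wtm m F = 0) ∧
    fWeightNum m n b k = (mLevelRookNum m n b k : ℝ) := by
  have hbad := S7.sum_bad (n := n) (b := b) hm hB k
  refine ⟨hbad, ?_⟩
  have hsplit := Finset.sum_filter_add_sum_filter_not (filePlacements n b k)
    (fun F => NoLevelRepeat m F) (wtm m)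
  unfold fWeightNum
  rw [← hsplit, hbad, add_zero]
  rw [Finset.sum_congr rfl (fun F hF => S7.wtm_good hm (Finset.mem_filter.1 hF).2)]
  rw [Finset.sum_const, nsmul_eq_mul, mul_one]
  congr 1
  unfold mLevelRookNum filePlacements
  rw [Finset.filter_filter]
  congr 1
  apply Finset.filter_congr
  intro P _
  constructor
  · rintro ⟨⟨h1, h2⟩, h3⟩
    exact ⟨h1, fun p hp q hq hpq => ⟨h2 p hp q hq hpq, h3 p hp q hq hpq⟩⟩
  · rintro ⟨h1, h2⟩
    exact ⟨⟨h1, fun p hp q hq hpq => (h2 p hp q hq hpq).1⟩,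
      fun p hp q hq hpq => (h2 p hp q hq hpq).2⟩
end

section
/- Fix an integer m ≥ 2 and a singleton board B with respect to m. Let F_0 be a file placement on B that is not an m-level rook placement, let l be the distinguished level of F_0 (the lowest level among those that contain the fewest rooks of F_0 greater than one), and suppose level l contains n rooks of F_0. Then the set 𝓟(F_0) — consisting of all file placements on B that agree with F_0 outside level l, agree with F_0 on the leftmost rook of level l, and place each remaining rook of level l in any cell of level l in its original column — contains exactly m^{n-1} file placements. -/
open scoped Classical

/-! ### Auxiliary lemmas for `statement8` -/

lemma ferrersMono_le {n : ℕ} {b : ℕ → ℕ} (h : FerrersMono n b) :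
    ∀ {i j : ℕ}, i ≤ j → j < n → b i ≤ b j := by
  intro i j hij hj
  induction j with
  | zero => simp_all
  | succ j ih =>
    rcases Nat.eq_or_lt_of_le hij with rfl | hlt
    · exact le_rfl
    · exact le_trans (ih (by omega) (by omega)) (h j hj)

lemma levelOf_eq_iff' {m l j : ℕ} (hm : 1 ≤ m) (hj : 1 ≤ j) :
    levelOf m j = l ↔ l * m + 1 ≤ j ∧ j ≤ l * m + m := by
  obtain ⟨j', rfl⟩ : ∃ j', j = j' + 1 := ⟨j - 1, by omega⟩
  unfold levelOf
  simp only [Nat.add_sub_cancel]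
  constructor
  · intro h
    have h1 : l * m ≤ j' := by
      have := Nat.div_mul_le_self j' m; rw [h] at this; exact this
    have h2 : j' < (l + 1) * m := by
      rw [← Nat.div_lt_iff_lt_mul (by omega)]; omega
    have h3 : (l + 1) * m = l * m + m := Nat.succ_mul l m
    omega
  · rintro ⟨h1, h2⟩
    have h3 : (l + 1) * m = l * m + m := Nat.succ_mul l m
    exact Nat.div_eq_of_lt_le (by omega) (by omega)

lemma singleton_avail {m n : ℕ} {b : ℕ → ℕ} (hm : 2 ≤ m) (hB : IsSingletonBoard m n b)
    {i i' l : ℕ} (hin : i < n) (hlt : i' < i) (hbi' : l * m + 1 ≤ b i') :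
    l * m + m ≤ b i := by
  obtain ⟨hmono, hsing⟩ := hB
  by_cases hcase : l * m + m ≤ b i'
  · exact le_trans hcase (ferrersMono_le hmono (le_of_lt hlt) hin)
  · push_neg at hcase
    have hsucc : (l + 1) * m = l * m + m := Nat.succ_mul l m
    have hdiv : b i' / m = l := Nat.div_eq_of_lt_le (by omega) (by omega)
    have hcomm : m * l = l * m := Nat.mul_comm m l
    have hne : b i' - mfloor m (b i') ≠ 0 := by rw [mfloor, hdiv]; omega
    have h2 := hsing i' (by omega) hne
    rw [mfloor, hdiv, mfloor] at h2
    have h3 : l + 1 ≤ b (i'+1) / m := by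
      have := Nat.lt_of_mul_lt_mul_left h2
      omega
    have h4 : m * (l+1) ≤ b (i'+1) :=
      le_trans (Nat.mul_le_mul_left m h3) (Nat.mul_div_le _ _)
    have h5 : b (i'+1) ≤ b i := ferrersMono_le hmono (by omega) hin
    have h6 : m * (l + 1) = l * m + m := by ring
    omega

/-- The row of the (unique) rook of `F` in level `l` and column `c`. -/
noncomputable def rowOfAux (m l : ℕ) (F : Finset (ℕ × ℕ)) (c : ℕ) : ℕ :=
  ((rooksInLevel m F l).filter fun p => p.1 = c).sum Prod.snd

lemma rowOfAux_eq {m l : ℕ} {F : Finset (ℕ × ℕ)}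
    (hcol : ∀ p ∈ F, ∀ q ∈ F, p ≠ q → p.1 ≠ q.1) {p : ℕ × ℕ}
    (hp : p ∈ rooksInLevel m F l) : rowOfAux m l F p.1 = p.2 := by
  have hsub : rooksInLevel m F l ⊆ F := Finset.filter_subset _ _
  have hfilter : (rooksInLevel m F l).filter (fun q => q.1 = p.1) = {p} := by
    ext q
    simp only [Finset.mem_filter, Finset.mem_singleton]
    constructor
    · rintro ⟨hq, hq1⟩
      by_contra hne
      exact hcol q (hsub hq) p (hsub hp) hne hq1
    · rintro rfl; exact ⟨hp, rfl⟩
  rw [rowOfAux, hfilter, Finset.sum_singleton]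

/-- The placement obtained from the out-of-level-`l` part of `F₀`, the leftmost
level-`l` rook `p₀`, and a choice `g` of rows for the other level-`l` columns `C'`. -/
noncomputable def buildF (m l : ℕ) (F₀ : Finset (ℕ × ℕ)) (p₀ : ℕ × ℕ) (C' : Finset ℕ)
    (g : ∀ a, a ∈ C' → ℕ) : Finset (ℕ × ℕ) :=
  (F₀.filter fun p => levelOf m p.2 ≠ l) ∪
    insert p₀ (C'.attach.image fun c => (c.1, g c.1 c.2))
/-- Let `m ≥ 2`, let `B` be a singleton board w.r.t. `m`, let `F₀` be
a file placement on `B` that is not an `m`-level rook placement, let `l` be its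
distinguished level, and suppose level `l` contains `k` rooks of `F₀`.  Then the class
`𝓟(F₀)` contains exactly `m^(k-1)` file placements. -/
theorem statement8 (m : ℕ) (hm : 2 ≤ m) (n : ℕ) (b : ℕ → ℕ)
    (hB : IsSingletonBoard m n b) (F₀ : Finset (ℕ × ℕ))
    (hF₀ : F₀ ∈ filePlacements n b F₀.card) (hnot : ¬ NoLevelRepeat m F₀)
    (l : ℕ) (hl : DistinguishedLevel m F₀ l)
    (k : ℕ) (hk : (rooksInLevel m F₀ l).card = k) :
    (classOf m n b l F₀).card = m ^ (k - 1) := by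
  classical
  have hm1 : 1 ≤ m := by omega
  have hF₀' := hF₀
  rw [filePlacements, Finset.mem_filter, Finset.mem_powerset] at hF₀'
  obtain ⟨hF₀sub, -, hF₀col⟩ := hF₀'
  have hcell : ∀ p ∈ F₀, p.1 < n ∧ 1 ≤ p.2 ∧ p.2 ≤ b p.1 := by
    intro p hp
    have h := hF₀sub hp
    simp only [cellFinset, Finset.mem_filter, Finset.mem_product, Finset.mem_range,
      Finset.mem_Icc] at h
    exact ⟨h.1.1, h.1.2.1, h.2⟩
  have hSsub : rooksInLevel m F₀ l ⊆ F₀ := Finset.filter_subset _ _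
  have hSmem : ∀ p, p ∈ rooksInLevel m F₀ l ↔ p ∈ F₀ ∧ levelOf m p.2 = l := by
    intro p; simp [rooksInLevel]
  have hSrow : ∀ p ∈ rooksInLevel m F₀ l, l * m + 1 ≤ p.2 ∧ p.2 ≤ l * m + m := by
    intro p hp
    exact (levelOf_eq_iff' hm1 (hcell p (hSsub hp)).2.1).mp ((hSmem p).mp hp).2
  have hk2 : 2 ≤ k := hk ▸ hl.1
  set C : Finset ℕ := (rooksInLevel m F₀ l).image Prod.fst with hCdef
  have hCcard : C.card = k := by
    rw [hCdef, Finset.card_image_of_injOn, hk]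
    intro p hp q hq hpq
    by_contra hne
    exact hF₀col p (hSsub hp) q (hSsub hq) hne hpq
  have hCne : C.Nonempty := Finset.card_pos.mp (by omega)
  set c₀ := C.min' hCne with hc₀def
  obtain ⟨p₀, hp₀S, hp₀c⟩ : ∃ p ∈ rooksInLevel m F₀ l, p.1 = c₀ :=
    Finset.mem_image.mp (C.min'_mem hCne)
  have hp₀uniq : ∀ p ∈ rooksInLevel m F₀ l, p.1 = c₀ → p = p₀ := by
    intro p hp hpc
    by_contra hne
    exact hF₀col p (hSsub hp) p₀ (hSsub hp₀S) hne (by rw [hpc, hp₀c])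
  set C' := C.erase c₀ with hC'def
  have hC'card : C'.card = k - 1 := by
    rw [hC'def, Finset.card_erase_of_mem (C.min'_mem hCne), hCcard]
  have hC'sub : C' ⊆ C := Finset.erase_subset _ _
  have hc₀notC' : c₀ ∉ C' := Finset.notMem_erase _ _
  have hColn : ∀ c ∈ C, c < n := by
    intro c hc
    obtain ⟨p, hp, rfl⟩ := Finset.mem_image.mp hc
    exact (hcell p (hSsub hp)).1
  have havail : ∀ c ∈ C', l * m + m ≤ b c := by
    intro c hc
    obtain ⟨p, hpS, rfl⟩ := Finset.mem_image.mp (hC'sub hc)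
    have hcne : p.1 ≠ c₀ := (Finset.mem_erase.mp hc).1
    have hlt : c₀ < p.1 := lt_of_le_of_ne (C.min'_le _ (hC'sub hc)) (Ne.symm hcne)
    have hb₀ : l * m + 1 ≤ b c₀ := by
      have h1 := (hSrow p₀ hp₀S).1
      have h2 := (hcell p₀ (hSsub hp₀S)).2.2
      rw [hp₀c] at h2; omega
    exact singleton_avail hm hB (hcell p (hSsub hpS)).1 hlt hb₀
  have hOutC : ∀ p ∈ F₀, levelOf m p.2 ≠ l → p.1 ∉ C := by
    intro p hp hpl hpC
    obtain ⟨q, hqS, hq1⟩ := Finset.mem_image.mp hpC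
    have hqlevel : levelOf m q.2 = l := ((hSmem q).mp hqS).2
    have hpq : p ≠ q := fun h => hpl (h ▸ hqlevel)
    exact hF₀col p hp q (hSsub hqS) hpq hq1.symm
  have hsplit : (rooksInLevel m F₀ l).card
      + (F₀.filter fun p => levelOf m p.2 ≠ l).card = F₀.card :=
    Finset.card_filter_add_card_filter_not _
  -- the target finset of row choices
  set T : Finset (∀ a, a ∈ C' → ℕ) := C'.pi (fun _ => Finset.Icc (l*m+1) (l*m+m)) with hTdef
  have hTcard : T.card = m ^ (k - 1) := by
    rw [hTdef, Finset.card_pi,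
      Finset.prod_congr rfl (fun c _ => show (Finset.Icc (l*m+1) (l*m+m)).card = m by
        rw [Nat.card_Icc]; omega),
      Finset.prod_const, hC'card]
  -- master facts about `buildF`
  have hbuild : ∀ g, g ∈ T →
      buildF m l F₀ p₀ C' g ∈ classOf m n b l F₀ ∧
      rooksInLevel m (buildF m l F₀ p₀ C' g) l
        = insert p₀ (C'.attach.image fun c => (c.1, g c.1 c.2)) ∧
      (∀ p ∈ buildF m l F₀ p₀ C' g, ∀ q ∈ buildF m l F₀ p₀ C' g, p ≠ q → p.1 ≠ q.1) := by
    intro g hg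
    rw [hTdef, Finset.mem_pi] at hg
    set L : Finset (ℕ × ℕ) := C'.attach.image (fun c => (c.1, g c.1 c.2)) with hLdef
    have hLspec : ∀ q ∈ L, q.1 ∈ C' ∧ l*m+1 ≤ q.2 ∧ q.2 ≤ l*m+m := by
      intro q hq
      rw [hLdef, Finset.mem_image] at hq
      obtain ⟨c, -, rfl⟩ := hq
      have h := hg c.1 c.2
      rw [Finset.mem_Icc] at h
      exact ⟨c.2, h.1, h.2⟩
    have hLcolinj : ∀ q ∈ L, ∀ q' ∈ L, q.1 = q'.1 → q = q' := by
      intro q hq q' hq' h1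
      rw [hLdef, Finset.mem_image] at hq hq'
      obtain ⟨c, -, rfl⟩ := hq
      obtain ⟨c', -, rfl⟩ := hq'
      simp only at h1
      have : c = c' := Subtype.ext h1
      rw [this]
    have hp₀L : p₀ ∉ L := fun h => hc₀notC' (hp₀c ▸ (hLspec p₀ h).1)
    have hLcard : L.card = k - 1 := by
      rw [hLdef, Finset.card_image_of_injective _
        (fun c c' h => Subtype.ext (congrArg Prod.fst h)), Finset.card_attach, hC'card]
    have hBL : ∀ q ∈ insert p₀ L, q.1 ∈ C ∧ l*m+1 ≤ q.2 ∧ q.2 ≤ l*m+m := by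
      intro q hq
      rcases Finset.mem_insert.mp hq with hq0 | hq
      · rw [hq0]; exact ⟨hp₀c ▸ C.min'_mem hCne, hSrow p₀ hp₀S⟩
      · exact ⟨hC'sub (hLspec q hq).1, (hLspec q hq).2⟩
    have hBLlevel : ∀ q ∈ insert p₀ L, levelOf m q.2 = l := by
      intro q hq
      have h := hBL q hq
      exact (levelOf_eq_iff' hm1 (by omega)).mpr ⟨h.2.1, h.2.2⟩
    have hBLcol : ∀ q ∈ insert p₀ L, ∀ q' ∈ insert p₀ L, q ≠ q' → q.1 ≠ q'.1 := by
      intro q hq q' hq' hne h1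
      rcases Finset.mem_insert.mp hq with hq0 | hqL
      · rcases Finset.mem_insert.mp hq' with hq0' | hqL'
        · exact hne (hq0.trans hq0'.symm)
        · apply hc₀notC'
          have h2 : q'.1 ∈ C' := (hLspec q' hqL').1
          rwa [← h1, hq0, hp₀c] at h2
      · rcases Finset.mem_insert.mp hq' with hq0' | hqL'
        · apply hc₀notC'
          have h2 : q.1 ∈ C' := (hLspec q hqL).1
          rwa [h1, hq0', hp₀c] at h2
        · exact hne (hLcolinj q hqL q' hqL' h1)
    have hdisj : Disjoint (F₀.filter fun p => levelOf m p.2 ≠ l) (insert p₀ L) := by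
      rw [Finset.disjoint_left]
      intro q hq hq'
      exact (Finset.mem_filter.mp hq).2 (hBLlevel q hq')
    have hrl : rooksInLevel m (buildF m l F₀ p₀ C' g) l = insert p₀ L := by
      ext q
      simp only [rooksInLevel, buildF, Finset.mem_filter, Finset.mem_union]
      constructor
      · rintro ⟨hq | hq, hql⟩
        · exact absurd hql hq.2
        · exact hq
      · intro hq
        exact ⟨Or.inr hq, hBLlevel q hq⟩
    have hcolAll : ∀ p ∈ buildF m l F₀ p₀ C' g, ∀ q ∈ buildF m l F₀ p₀ C' g,
        p ≠ q → p.1 ≠ q.1 := by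
      intro p hp q hq hne
      rw [buildF, Finset.mem_union] at hp hq
      rcases hp with hp | hp <;> rcases hq with hq | hq
      · exact hF₀col p (Finset.mem_filter.mp hp).1 q (Finset.mem_filter.mp hq).1 hne
      · intro h1
        exact hOutC p (Finset.mem_filter.mp hp).1 (Finset.mem_filter.mp hp).2
          (h1 ▸ (hBL q hq).1)
      · intro h1
        exact hOutC q (Finset.mem_filter.mp hq).1 (Finset.mem_filter.mp hq).2
          (h1 ▸ (hBL p hp).1)
      · exact hBLcol p hp q hq hne
    refine ⟨?_, hrl, hcolAll⟩
    rw [classOf, Finset.mem_filter]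
    refine ⟨?_, ?_, ?_, ?_⟩
    · -- membership in filePlacements
      rw [filePlacements, Finset.mem_filter, Finset.mem_powerset]
      refine ⟨?_, ?_, hcolAll⟩
      · intro q hq
        rw [buildF, Finset.mem_union] at hq
        rcases hq with hq | hq
        · exact hF₀sub (Finset.mem_filter.mp hq).1
        · rcases Finset.mem_insert.mp hq with rfl | hqL
          · exact hF₀sub (hSsub hp₀S)
          · have h1 := hLspec q hqL
            have hc : q.1 ∈ C := hC'sub h1.1
            have hn : q.1 < n := hColn q.1 hc
            have hb : q.2 ≤ b q.1 := le_trans h1.2.2 (havail q.1 h1.1)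
            simp only [cellFinset, Finset.mem_filter, Finset.mem_product, Finset.mem_range,
              Finset.mem_Icc]
            exact ⟨⟨hn, by omega, le_trans hb (Finset.le_sup (Finset.mem_range.mpr hn))⟩, hb⟩
      · rw [buildF, Finset.card_union_of_disjoint hdisj,
          Finset.card_insert_of_notMem hp₀L, hLcard]
        omega
    · -- out-of-level part agrees
      ext q
      simp only [buildF, Finset.mem_filter, Finset.mem_union]
      constructor
      · rintro ⟨hq | hq, hql⟩
        · exact hq
        · exact absurd (hBLlevel q hq) hql
      · rintro ⟨hqF, hql⟩
        exact ⟨Or.inl ⟨hqF, hql⟩, hql⟩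
    · -- columns agree
      rw [hrl, Finset.image_insert, hp₀c]
      have himL : L.image Prod.fst = C' := by
        ext x
        constructor
        · intro hx
          obtain ⟨q, hqL, rfl⟩ := Finset.mem_image.mp hx
          exact (hLspec q hqL).1
        · intro hx
          exact Finset.mem_image.mpr ⟨(x, g x hx),
            Finset.mem_image.mpr ⟨⟨x, hx⟩, Finset.mem_attach _ _, rfl⟩, rfl⟩
      rw [himL, hC'def]
      exact (Finset.insert_erase (C.min'_mem hCne))
    · -- leftmost rook
      intro p hp hmin
      rw [hrl] at hp hmin
      have h1 : p.1 ≤ c₀ := hp₀c ▸ hmin p₀ (Finset.mem_insert_self _ _)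
      have h2 : c₀ ≤ p.1 := C.min'_le _ (hBL p hp).1
      have h3 : p.1 = c₀ := le_antisymm h1 h2
      rcases Finset.mem_insert.mp hp with rfl | hpL
      · exact hSsub hp₀S
      · exact absurd (h3 ▸ (hLspec p hpL).1) hc₀notC'
  -- the bijection
  rw [← hTcard]
  refine Finset.card_bij' (fun F _ => fun c _ => rowOfAux m l F c)
    (fun g _ => buildF m l F₀ p₀ C' g) ?_ (fun g hg => (hbuild g hg).1) ?_ ?_
  · -- forward map lands in T
    intro F hF
    rw [classOf, Finset.mem_filter] at hF
    obtain ⟨hFfile, -, hFim, -⟩ := hF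
    rw [filePlacements, Finset.mem_filter, Finset.mem_powerset] at hFfile
    obtain ⟨hFsub, -, hFcol⟩ := hFfile
    rw [hTdef, Finset.mem_pi]
    intro c hc
    have hcC : c ∈ (rooksInLevel m F l).image Prod.fst := by
      rw [hFim]; exact hC'sub hc
    obtain ⟨p, hpFL, rfl⟩ := Finset.mem_image.mp hcC
    show rowOfAux m l F p.1 ∈ Finset.Icc (l * m + 1) (l * m + m)
    rw [rowOfAux_eq hFcol hpFL, Finset.mem_Icc]
    have hpF : p ∈ F := Finset.filter_subset _ _ hpFL
    have hp1 : 1 ≤ p.2 := by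
      have h := hFsub hpF
      simp only [cellFinset, Finset.mem_filter, Finset.mem_product, Finset.mem_range,
        Finset.mem_Icc] at h
      exact h.1.2.1
    exact (levelOf_eq_iff' hm1 hp1).mp (Finset.mem_filter.mp hpFL).2
  · -- left inverse
    intro F hF
    rw [classOf, Finset.mem_filter] at hF
    obtain ⟨hFfile, hFout, hFim, hFleft⟩ := hF
    rw [filePlacements, Finset.mem_filter, Finset.mem_powerset] at hFfile
    obtain ⟨hFsub, hFcard, hFcol⟩ := hFfile
    have hFLsub : rooksInLevel m F l ⊆ F := Finset.filter_subset _ _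
    have hp₀F : p₀ ∈ rooksInLevel m F l := by
      have hc₀' : c₀ ∈ (rooksInLevel m F l).image Prod.fst := by
        rw [hFim]; exact C.min'_mem hCne
      obtain ⟨p, hpFL, hpc⟩ := Finset.mem_image.mp hc₀'
      have hpmin : ∀ q ∈ rooksInLevel m F l, p.1 ≤ q.1 := by
        intro q hq
        have hqC : q.1 ∈ (rooksInLevel m F l).image Prod.fst :=
          Finset.mem_image_of_mem _ hq
        rw [hFim] at hqC
        rw [hpc]; exact C.min'_le _ hqC
      have hpF₀ : p ∈ F₀ := hFleft p hpFL hpmin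
      have hpS : p ∈ rooksInLevel m F₀ l :=
        (hSmem p).mpr ⟨hpF₀, (Finset.mem_filter.mp hpFL).2⟩
      exact hp₀uniq p hpS hpc ▸ hpFL
    have hFLdesc : rooksInLevel m F l
        = insert p₀ (C'.attach.image fun c => (c.1, rowOfAux m l F c.1)) := by
      ext q
      constructor
      · intro hq
        apply Finset.mem_insert.mpr
        by_cases hqc : q.1 = c₀
        · left
          by_contra hne
          exact hFcol q (hFLsub hq) p₀ (hFLsub hp₀F) hne (by rw [hqc, hp₀c])
        · right
          have hqC : q.1 ∈ (rooksInLevel m F l).image Prod.fst :=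
            Finset.mem_image_of_mem _ hq
          rw [hFim] at hqC
          have hqC' : q.1 ∈ C' := Finset.mem_erase.mpr ⟨hqc, hqC⟩
          refine Finset.mem_image.mpr ⟨⟨q.1, hqC'⟩, Finset.mem_attach _ _, ?_⟩
          show (q.1, rowOfAux m l F q.1) = q
          rw [rowOfAux_eq hFcol hq]
      · intro hq
        rcases Finset.mem_insert.mp hq with hq0 | hq0
        · rw [hq0]; exact hp₀F
        · obtain ⟨c, -, hc'⟩ := Finset.mem_image.mp hq0
          rw [← hc']
          have hcC : (c : ℕ) ∈ (rooksInLevel m F l).image Prod.fst := by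
            rw [hFim]; exact hC'sub c.2
          obtain ⟨p, hpFL, hpc⟩ := Finset.mem_image.mp hcC
          rw [← hpc, rowOfAux_eq hFcol hpFL]
          exact hpFL
    show buildF m l F₀ p₀ C' (fun c _ => rowOfAux m l F c) = F
    simp only [buildF]
    rw [← hFout, ← hFLdesc, Finset.union_comm]
    show F.filter (fun p => levelOf m p.2 = l) ∪ F.filter (fun p => ¬ levelOf m p.2 = l) = F
    exact Finset.filter_union_filter_not_eq _ F
  · -- right inverse
    intro g hg
    funext c hc
    have hmem : ((c : ℕ), g c hc) ∈ rooksInLevel m (buildF m l F₀ p₀ C' g) l := by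
      rw [(hbuild g hg).2.1]
      refine Finset.mem_insert_of_mem (Finset.mem_image.mpr ⟨⟨c, hc⟩, Finset.mem_attach _ _, rfl⟩)
    exact rowOfAux_eq (hbuild g hg).2.2 hmem
end

section
/- Fix an integer m ≥ 2 and a singleton board B with respect to m. Let F_0 be a file placement on B that is not an m-level rook placement whose distinguished level l (the lowest level among those containing at least two rooks of F_0, chosen with the fewest such rooks) contains exactly two rooks of F_0. Then the classes obtained by moving the rightmost rook of level l to each of the m cells of level l in its own column have m-weights summing to zero: Σ_{F ∈ 𝓟(F_0)} wt_m(F) = 0. -/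
open scoped Classical

lemma mfall_one' (m : ℕ) : mfall 1 m 1 = 1 := by
  simp [mfall]

lemma mfall_two' (m : ℕ) : mfall 1 m 2 = 1 - m := by
  rw [mfall]
  rw [Finset.prod_range_succ, Finset.prod_range_one]
  push_cast
  ring

lemma wtm_insert_new (m : ℕ) (E : Finset (ℕ × ℕ)) (p : ℕ × ℕ)
    (h : p.2 ∉ E.image Prod.snd) : wtm m (insert p E) = wtm m E := by
  unfold wtm
  rw [Finset.image_insert, Finset.prod_insert h]
  have h1 : ((insert p E).filter fun q => q.2 = p.2) = {p} := by
    ext q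
    simp only [Finset.mem_filter, Finset.mem_insert, Finset.mem_singleton]
    constructor
    · rintro ⟨hq | hq, hq2⟩
      · exact hq
      · exact absurd (Finset.mem_image_of_mem Prod.snd hq) (by rw [hq2]; exact h)
    · rintro rfl; exact ⟨Or.inl rfl, rfl⟩
  have h2 : ∀ j ∈ E.image Prod.snd,
      mfall 1 m (((insert p E).filter fun q => q.2 = j).card)
        = mfall 1 m ((E.filter fun q => q.2 = j).card) := by
    intro j hj
    congr 1
    rw [Finset.filter_insert, if_neg]
    intro hpj; rw [← hpj] at hj; exact h hj
  rw [h1, Finset.prod_congr rfl h2]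
  simp [mfall_one']

lemma wtm_insert_dup (m : ℕ) (E : Finset (ℕ × ℕ)) (p : ℕ × ℕ)
    (hpE : p ∉ E) (hc : (E.filter fun q => q.2 = p.2).card = 1) :
    wtm m (insert p E) = (1 - (m : ℝ)) * wtm m E := by
  have hmem : p.2 ∈ E.image Prod.snd := by
    obtain ⟨s, hs⟩ := Finset.card_eq_one.mp hc
    have hsm : s ∈ E.filter fun q => q.2 = p.2 := hs ▸ Finset.mem_singleton_self s
    obtain ⟨hsE, hs2⟩ := Finset.mem_filter.mp hsm
    rw [← hs2]
    exact Finset.mem_image_of_mem _ hsE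
  unfold wtm
  rw [Finset.image_insert, Finset.insert_eq_self.mpr hmem]
  rw [← Finset.mul_prod_erase _ _ hmem, ← Finset.mul_prod_erase _ _ hmem]
  have hfe : ∀ j ∈ (E.image Prod.snd).erase p.2,
      mfall 1 m (((insert p E).filter fun q => q.2 = j).card)
        = mfall 1 m ((E.filter fun q => q.2 = j).card) := by
    intro j hj
    congr 1
    rw [Finset.filter_insert, if_neg]
    exact fun h => (Finset.mem_erase.mp hj).1 h.symm
  rw [Finset.prod_congr rfl hfe]
  have h1 : ((insert p E).filter fun q => q.2 = p.2)
      = insert p (E.filter fun q => q.2 = p.2) := by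
    rw [Finset.filter_insert, if_pos rfl]
  rw [h1, Finset.card_insert_of_notMem (fun h => hpE (Finset.mem_filter.mp h).1), hc]
  rw [mfall_one', mfall_two']
  ring

lemma levelOf_eq' (m l j : ℕ) (hm : 1 ≤ m) (h1 : l * m + 1 ≤ j) (h2 : j ≤ l * m + m) :
    levelOf m j = l := by
  unfold levelOf
  apply Nat.div_eq_of_lt_le
  · omega
  · have h3 : (l + 1) * m = l * m + m := by ring
    omega

lemma levelOf_mem' (m l j : ℕ) (hm : 1 ≤ m) (hj : 1 ≤ j) (h : levelOf m j = l) :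
    l * m + 1 ≤ j ∧ j ≤ l * m + m := by
  unfold levelOf at h
  have h1 := Nat.div_add_mod (j - 1) m
  have h2 := Nat.mod_lt (j - 1) (show 0 < m by omega)
  rw [h] at h1
  have h3 : m * l = l * m := by ring
  omega

/-- base case.  Let `m ≥ 2`, let `B` be a singleton board w.r.t. `m`,
and let `F₀` be a file placement on `B` that is not an `m`-level rook placement whose
distinguished level `l` contains exactly two rooks of `F₀`, the rightmost of which is
`r`.  Then the `m`-weights of the placements obtained by moving `r` to each of the `m`
cells of level `l` in its own column (rows `l*m + 1, …, l*m + m`) sum to zero. -/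
theorem statement9 (m : ℕ) (hm : 2 ≤ m) (n : ℕ) (b : ℕ → ℕ)
    (hB : IsSingletonBoard m n b) (F₀ : Finset (ℕ × ℕ))
    (hF₀ : F₀ ∈ filePlacements n b F₀.card) (hnot : ¬ NoLevelRepeat m F₀)
    (l : ℕ) (hl : DistinguishedLevel m F₀ l)
    (h2 : (rooksInLevel m F₀ l).card = 2)
    (r : ℕ × ℕ) (hr : r ∈ rooksInLevel m F₀ l)
    (hright : ∀ q ∈ rooksInLevel m F₀ l, q.1 ≤ r.1) :
    ∑ F ∈ (Finset.Icc (l * m + 1) (l * m + m)).image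
        (fun j => insert (r.1, j) (F₀.erase r)), wtm m F = 0 := by
  have hmem := Finset.mem_filter.mp hF₀
  have hsub : F₀ ⊆ cellFinset n b := Finset.mem_powerset.mp hmem.1
  have hcol : ∀ p ∈ F₀, ∀ q ∈ F₀, p ≠ q → p.1 ≠ q.1 := hmem.2.2
  have hrF : r ∈ F₀ := (Finset.mem_filter.mp hr).1
  -- extract the other rook `s` of level `l`
  have hcard2 : ((rooksInLevel m F₀ l).erase r).card = 1 := by
    rw [Finset.card_erase_of_mem hr, h2]
  obtain ⟨s, hs⟩ := Finset.card_eq_one.mp hcard2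
  have hsmem : s ∈ (rooksInLevel m F₀ l).erase r := hs ▸ Finset.mem_singleton_self s
  have hsr : s ≠ r := (Finset.mem_erase.mp hsmem).1
  have hsl : s ∈ rooksInLevel m F₀ l := (Finset.mem_erase.mp hsmem).2
  have hsF : s ∈ F₀ := (Finset.mem_filter.mp hsl).1
  have hslev : levelOf m s.2 = l := (Finset.mem_filter.mp hsl).2
  have hs1 : 1 ≤ s.2 := by
    have h := hsub hsF
    simp only [cellFinset, Finset.mem_filter, Finset.mem_product, Finset.mem_Icc] at h
    exact h.1.2.1
  have hj₀ : s.2 ∈ Finset.Icc (l * m + 1) (l * m + m) := by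
    have h := levelOf_mem' m l s.2 (by omega) hs1 hslev
    exact Finset.mem_Icc.mpr h
  set E := F₀.erase r with hE
  have hEl : E.filter (fun p => levelOf m p.2 = l) = {s} := by
    rw [hE, Finset.filter_erase]
    exact hs
  have hnotE : ∀ j, (r.1, j) ∉ E := by
    intro j hmemE
    have hF : (r.1, j) ∈ F₀ := Finset.mem_of_mem_erase hmemE
    by_cases hrj : (r.1, j) = r
    · rw [hrj] at hmemE
      exact Finset.notMem_erase r F₀ hmemE
    · exact hcol _ hF r hrF hrj rfl
  have hrow0 : ∀ j, levelOf m j = l → j ≠ s.2 → j ∉ E.image Prod.snd := by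
    intro j hjl hjs hj
    obtain ⟨p, hpE, hp2⟩ := Finset.mem_image.mp hj
    have hps : p ∈ E.filter (fun p => levelOf m p.2 = l) :=
      Finset.mem_filter.mpr ⟨hpE, by rw [hp2]; exact hjl⟩
    rw [hEl] at hps
    have hps' := Finset.mem_singleton.mp hps
    exact hjs (hp2.symm.trans (congrArg Prod.snd hps'))
  have hrow1 : (E.filter fun q => q.2 = s.2) = {s} := by
    ext q
    simp only [Finset.mem_filter, Finset.mem_singleton]
    constructor
    · rintro ⟨hqE, hq2⟩
      have hq : q ∈ E.filter (fun p => levelOf m p.2 = l) :=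
        Finset.mem_filter.mpr ⟨hqE, by rw [hq2]; exact hslev⟩
      rw [hEl] at hq
      exact Finset.mem_singleton.mp hq
    · rintro rfl
      exact ⟨Finset.mem_erase.mpr ⟨hsr, hsF⟩, rfl⟩
  have hinj : ∀ j ∈ Finset.Icc (l*m+1) (l*m+m), ∀ j' ∈ Finset.Icc (l*m+1) (l*m+m),
      insert (r.1, j) E = insert (r.1, j') E → j = j' := by
    intro j _ j' _ h
    have hmj : (r.1, j) ∈ insert (r.1, j') E := h ▸ Finset.mem_insert_self _ _
    rcases Finset.mem_insert.mp hmj with h1 | h1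
    · exact (Prod.ext_iff.mp h1).2
    · exact absurd h1 (hnotE j)
  rw [Finset.sum_image hinj]
  rw [← Finset.sum_erase_add _ _ hj₀]
  have hterm1 : ∀ j ∈ (Finset.Icc (l*m+1) (l*m+m)).erase s.2,
      wtm m (insert (r.1, j) E) = wtm m E := by
    intro j hj
    obtain ⟨hjs, hjIcc⟩ := Finset.mem_erase.mp hj
    obtain ⟨ha, hb⟩ := Finset.mem_Icc.mp hjIcc
    exact wtm_insert_new m E (r.1, j) (hrow0 j (levelOf_eq' m l j (by omega) ha hb) hjs)
  rw [Finset.sum_congr rfl hterm1, Finset.sum_const]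
  have hcardIcc : ((Finset.Icc (l*m+1) (l*m+m)).erase s.2).card = m - 1 := by
    rw [Finset.card_erase_of_mem hj₀, Nat.card_Icc]
    omega
  have hdup : wtm m (insert (r.1, s.2) E) = (1 - (m : ℝ)) * wtm m E :=
    wtm_insert_dup m E (r.1, s.2) (hnotE s.2)
      (by show (E.filter fun q => q.2 = s.2).card = 1; rw [hrow1]; simp)
  rw [hcardIcc, hdup, nsmul_eq_mul]
  have hcast : ((m - 1 : ℕ) : ℝ) = (m : ℝ) - 1 := by
    have : 1 ≤ m := by omega
    push_cast [this]
    ring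
  rw [hcast]
  ring
end

section
/- Fix an integer m ≥ 2 and a singleton board B with respect to m. Let F_0 be any file placement on B that is not an m-level rook placement, and let 𝓟(F_0) be the class of F_0: all file placements agreeing with F_0 outside the distinguished level l and on the leftmost rook of level l, with each remaining rook of level l placed in any cell of level l in its original column. Then Σ_{F ∈ 𝓟(F_0)} wt_m(F) = 0. -/
open scoped Classical

lemma mfall_succ (x : ℝ) (m k : ℕ) : mfall x m (k+1) = mfall x m k * (x - m*k) := by
  unfold mfall; rw [Finset.prod_range_succ]

lemma cnt_cons {α : Type*} [DecidableEq α] (S : Finset α) (a : α) (ha : a ∉ S)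
    (b : ℕ) (g : ∀ x ∈ S, ℕ) (j : ℕ) :
    ((insert a S).attach.filter
        (fun c => Finset.Pi.cons S a b g c.1 c.2 = j)).card
    = (if b = j then 1 else 0) + (S.attach.filter (fun c => g c.1 c.2 = j)).card := by
  rw [Finset.attach_insert, Finset.filter_insert]
  have himg : ∀ (p : {x // x ∈ S}), Finset.Pi.cons S a b g p.1 (Finset.mem_insert_of_mem p.2)
      = g p.1 p.2 := by
    intro p
    exact Finset.Pi.cons_ne (a := a) (a' := (p : α)) (fun h => ha (h ▸ p.2))
  have hfilter : ((Finset.image (fun p : {x // x ∈ S} => (⟨p.1, Finset.mem_insert_of_mem p.2⟩ :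
        {x // x ∈ insert a S})) S.attach).filter
        (fun c => Finset.Pi.cons S a b g c.1 c.2 = j))
      = Finset.image (fun p : {x // x ∈ S} => (⟨p.1, Finset.mem_insert_of_mem p.2⟩ :
        {x // x ∈ insert a S})) (S.attach.filter (fun c => g c.1 c.2 = j)) := by
    rw [Finset.filter_image]
    congr 1
    apply Finset.filter_congr
    intro p _
    simp [himg p]
  have hinj : Function.Injective (fun p : {x // x ∈ S} => (⟨p.1, Finset.mem_insert_of_mem p.2⟩ :
      {x // x ∈ insert a S})) := by
    intro p q h
    simp only [Subtype.mk.injEq] at h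
    exact Subtype.ext h
  have hnotmem : (⟨a, Finset.mem_insert_self a S⟩ : {x // x ∈ insert a S}) ∉
      Finset.image (fun p : {x // x ∈ S} => (⟨p.1, Finset.mem_insert_of_mem p.2⟩ :
        {x // x ∈ insert a S})) (S.attach.filter (fun c => g c.1 c.2 = j)) := by
    simp only [Finset.mem_image, Subtype.mk.injEq]
    rintro ⟨p, _, hp⟩
    exact ha (hp ▸ p.2)
  by_cases hb : b = j
  · rw [if_pos (by simpa [Finset.Pi.cons_same] using hb), hfilter,
      Finset.card_insert_of_notMem hnotmem, Finset.card_image_of_injective _ hinj]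
    simp [hb, Nat.add_comm]
  · rw [if_neg (by simpa [Finset.Pi.cons_same] using hb), hfilter,
      Finset.card_image_of_injective _ hinj]
    simp [hb]

lemma key {α : Type*} [DecidableEq α] (m : ℕ) (R : Finset ℕ) (S : Finset α) (f : ℕ → ℕ) :
    ∑ g ∈ S.pi (fun _ => R),
      ∏ j ∈ R, mfall 1 m (f j + (S.attach.filter (fun a => g a.1 a.2 = j)).card)
    = (∏ j ∈ R, mfall 1 m (f j)) *
      ∏ t ∈ Finset.range S.card, ((R.card : ℝ) - m * ((∑ j ∈ R, f j) + t)) := by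
  induction S using Finset.induction generalizing f with
  | empty => simp
  | @insert a S ha ih =>
    rw [Finset.pi_insert ha]
    rw [Finset.sum_biUnion]
    · have hsum : ∀ b ∈ R, ∑ F ∈ (S.pi fun _ => R).image (Finset.Pi.cons S a b),
          ∏ j ∈ R, mfall 1 m (f j + ((insert a S).attach.filter (fun c => F c.1 c.2 = j)).card)
          = ((∏ j ∈ R, mfall 1 m (f j)) * (1 - m * f b))
            * ∏ t ∈ Finset.range S.card, ((R.card : ℝ) - m * ((∑ j ∈ R, f j) + 1 + t)) := by
        intro b hb
        rw [Finset.sum_image (fun g hg g' hg' h => Finset.Pi.cons_injective ha h)]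
        have hcong : ∀ g ∈ S.pi (fun _ => R),
            ∏ j ∈ R, mfall 1 m (f j + ((insert a S).attach.filter
              (fun c => Finset.Pi.cons S a b g c.1 c.2 = j)).card)
            = ∏ j ∈ R, mfall 1 m ((fun j => f j + if b = j then 1 else 0) j
                + (S.attach.filter (fun c => g c.1 c.2 = j)).card) := by
          intro g hg
          apply Finset.prod_congr rfl
          intro j _
          rw [cnt_cons S a ha b g j]
          ring_nf
        rw [Finset.sum_congr rfl hcong, ih]
        have h1 : (∑ j ∈ R, (f j + if b = j then 1 else 0)) = (∑ j ∈ R, f j) + 1 := by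
          rw [Finset.sum_add_distrib, Finset.sum_ite_eq, if_pos hb]
        have h2 : (∏ j ∈ R, mfall 1 m (f j + if b = j then 1 else 0))
            = (∏ j ∈ R, mfall 1 m (f j)) * (1 - m * f b) := by
          rw [← Finset.prod_erase_mul _ _ hb, ← Finset.prod_erase_mul _ _ hb]
          have : ∀ j ∈ R.erase b, mfall 1 m (f j + if b = j then 1 else 0)
              = mfall 1 m (f j) := by
            intro j hj
            rw [if_neg (Ne.symm (Finset.ne_of_mem_erase hj)), Nat.add_zero]
          rw [Finset.prod_congr rfl this, if_pos rfl, mfall_succ]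
          ring
        rw [h1, h2]
        apply congrArg
        apply Finset.prod_congr rfl
        intro t _
        push_cast
        ring
      rw [Finset.sum_congr rfl hsum]
      rw [Finset.card_insert_of_notMem ha, Finset.prod_range_succ']
      rw [← Finset.sum_mul]
      have h3 : ∑ i ∈ R, (∏ j ∈ R, mfall 1 m (f j)) * (1 - (m:ℝ) * f i)
          = (∏ j ∈ R, mfall 1 m (f j)) * ((R.card : ℝ) - m * (∑ j ∈ R, f j)) := by
        rw [← Finset.mul_sum]
        congr 1
        rw [Finset.sum_sub_distrib, Finset.sum_const, ← Finset.mul_sum]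
        push_cast
        ring
      rw [h3]
      have h4 : ∏ k ∈ Finset.range S.card, ((R.card:ℝ) - ↑m * (↑(∑ j ∈ R, f j) + ↑(k + 1)))
          = ∏ t ∈ Finset.range S.card, ((R.card:ℝ) - ↑m * (↑(∑ j ∈ R, f j) + 1 + ↑t)) := by
        apply Finset.prod_congr rfl
        intro t _
        push_cast
        ring
      rw [h4]
      push_cast
      ring
    · intro b1 hb1 b2 hb2 hne
      apply Finset.disjoint_left.2
      intro F hF1 hF2
      obtain ⟨g1, _, h1⟩ := Finset.mem_image.1 hF1
      obtain ⟨g2, _, h2⟩ := Finset.mem_image.1 hF2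
      apply hne
      have e1 : F a (Finset.mem_insert_self a S) = b1 := by
        rw [← h1]; exact Finset.Pi.cons_same S a b1 g1 _
      have e2 : F a (Finset.mem_insert_self a S) = b2 := by
        rw [← h2]; exact Finset.Pi.cons_same S a b2 g2 _
      rw [← e1, e2]


lemma mem_cellFinset {n : ℕ} {b : ℕ → ℕ} {p : ℕ × ℕ} :
    p ∈ cellFinset n b ↔ p.1 < n ∧ 1 ≤ p.2 ∧ p.2 ≤ b p.1 := by
  unfold cellFinset
  simp only [Finset.mem_filter, Finset.mem_product, Finset.mem_range, Finset.mem_Icc]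
  constructor
  · rintro ⟨⟨h1, h2, h3⟩, h4⟩
    exact ⟨h1, h2, h4⟩
  · rintro ⟨h1, h2, h4⟩
    exact ⟨⟨h1, h2, le_trans h4 (Finset.le_sup (Finset.mem_range.2 h1))⟩, h4⟩

lemma levelOf_of_mem_Icc {m l j : ℕ} (hm : 0 < m) (hj : j ∈ Finset.Icc (l*m+1) (l*m+m)) :
    levelOf m j = l := by
  rw [Finset.mem_Icc] at hj
  unfold levelOf
  have h1 : j - 1 = m * l + (j - 1 - l * m) := by
    have hml : m * l = l * m := Nat.mul_comm m l
    omega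
  have h2 : j - 1 - l * m < m := by omega
  rw [h1, Nat.mul_add_div hm, Nat.div_eq_of_lt h2, Nat.add_zero]

lemma mem_Icc_of_levelOf {m l j : ℕ} (hm : 0 < m) (hj : 1 ≤ j) (h : levelOf m j = l) :
    j ∈ Finset.Icc (l*m+1) (l*m+m) := by
  unfold levelOf at h
  have h2 := Nat.div_add_mod (j-1) m
  have h3 := Nat.mod_lt (j-1) hm
  rw [h] at h2
  have hml : l * m = m * l := Nat.mul_comm l m
  rw [Finset.mem_Icc]
  omega

/-- main theorem.  Let `m ≥ 2`, let `B` be a singleton board w.r.t.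
`m`, let `F₀` be any file placement on `B` that is not an `m`-level rook placement, and
let `l` be its distinguished level.  Then the `m`-weights of the placements in the class
`𝓟(F₀)` sum to zero. -/
theorem statement10 (m : ℕ) (hm : 2 ≤ m) (n : ℕ) (b : ℕ → ℕ)
    (hB : IsSingletonBoard m n b) (F₀ : Finset (ℕ × ℕ))
    (hF₀ : F₀ ∈ filePlacements n b F₀.card) (hnot : ¬ NoLevelRepeat m F₀)
    (l : ℕ) (hl : DistinguishedLevel m F₀ l) :
    ∑ F ∈ classOf m n b l F₀, wtm m F = 0 := by
  classical
  obtain ⟨hmono, hsing⟩ := hB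
  rw [filePlacements, Finset.mem_filter, Finset.mem_powerset] at hF₀
  obtain ⟨hsub, -, hcol⟩ := hF₀
  have hm0 : 0 < m := by omega
  have huniq : ∀ p ∈ F₀, ∀ q ∈ F₀, p.1 = q.1 → p = q := by
    intro p hp q hq h
    by_contra hne
    exact hcol p hp q hq hne h
  have hbmono : ∀ j, j < n → ∀ i, i ≤ j → b i ≤ b j := by
    intro j
    induction j with
    | zero =>
      intro _ i hi
      have : i = 0 := by omega
      rw [this]
    | succ k ih =>
      intro hj i hi
      rcases Nat.eq_or_lt_of_le hi with h | h
      · rw [h]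
      · exact le_trans (ih (by omega) i (by omega)) (hmono k hj)
  have hcell : ∀ p ∈ F₀, p.1 < n ∧ 1 ≤ p.2 ∧ p.2 ≤ b p.1 := fun p hp =>
    mem_cellFinset.1 (hsub hp)
  set R : Finset ℕ := Finset.Icc (l*m+1) (l*m+m) with hRdef
  have hRcard : R.card = m := by rw [hRdef, Nat.card_Icc]; omega
  set L₀ := rooksInLevel m F₀ l with hL₀def
  have hL₀sub : L₀ ⊆ F₀ := Finset.filter_subset _ _
  have hL₀mem : ∀ p, p ∈ L₀ ↔ p ∈ F₀ ∧ levelOf m p.2 = l := by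
    intro p; rw [hL₀def, rooksInLevel, Finset.mem_filter]
  have hL₀card : 2 ≤ L₀.card := hl.1
  set C := L₀.image Prod.fst with hCdef
  have hCcard : C.card = L₀.card := by
    rw [hCdef]
    apply Finset.card_image_of_injOn
    intro p hp q hq h
    exact huniq p (hL₀sub hp) q (hL₀sub hq) h
  have hCne : C.Nonempty := Finset.card_pos.1 (by omega)
  set c₀ := C.min' hCne with hc₀def
  have hc₀C : c₀ ∈ C := C.min'_mem hCne
  have hc₀min : ∀ c ∈ C, c₀ ≤ c := fun c hc => C.min'_le c hc
  obtain ⟨p₀, hp₀L, hp₀c⟩ := Finset.mem_image.1 (hCdef ▸ hc₀C)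
  have hp₀F : p₀ ∈ F₀ := hL₀sub hp₀L
  have hp₀lev : levelOf m p₀.2 = l := ((hL₀mem p₀).1 hp₀L).2
  have hp₀R : p₀.2 ∈ R := mem_Icc_of_levelOf hm0 (hcell p₀ hp₀F).2.1 hp₀lev
  set C' := C.erase c₀ with hC'def
  have hC'card : C'.card + 1 = C.card := by
    rw [hC'def, Finset.card_erase_of_mem hc₀C]; omega
  set Fout := F₀.filter (fun p => levelOf m p.2 ≠ l) with hFoutdef
  have hFoutsub : Fout ⊆ F₀ := Finset.filter_subset _ _
  have hFoutmem : ∀ p, p ∈ Fout ↔ p ∈ F₀ ∧ levelOf m p.2 ≠ l := by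
    intro p; rw [hFoutdef, Finset.mem_filter]
  have hColsOut : ∀ p ∈ Fout, p.1 ∉ C := by
    intro p hp hpC
    obtain ⟨q, hqL, hqc⟩ := Finset.mem_image.1 (hCdef ▸ hpC)
    have hq := (hL₀mem q).1 hqL
    have := huniq p (hFoutsub hp) q hq.1 hqc.symm
    rw [this] at hp
    exact ((hFoutmem q).1 hp).2 hq.2
  have hCmem : ∀ c ∈ C, ∃ p ∈ L₀, p.1 = c := by
    intro c hc
    obtain ⟨p, hpL, hpc⟩ := Finset.mem_image.1 (hCdef ▸ hc)
    exact ⟨p, hpL, hpc⟩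
  have hCb : ∀ c ∈ C, c < n ∧ l*m+1 ≤ b c := by
    intro c hc
    obtain ⟨p, hpL, hpc⟩ := hCmem c hc
    have hpF := hL₀sub hpL
    have hcc := hcell p hpF
    have hpR : p.2 ∈ R := mem_Icc_of_levelOf hm0 hcc.2.1 ((hL₀mem p).1 hpL).2
    rw [hRdef, Finset.mem_Icc] at hpR
    rw [hpc] at hcc
    exact ⟨hcc.1, by omega⟩
  have hG : ∀ c ∈ C', l*m+m ≤ b c := by
    intro c hc
    have hcC : c ∈ C := Finset.mem_of_mem_erase hc
    have hne : c ≠ c₀ := Finset.ne_of_mem_erase hc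
    have hlt : c₀ < c := lt_of_le_of_ne (hc₀min c hcC) (Ne.symm hne)
    obtain ⟨hcn, hcb⟩ := hCb c hcC
    obtain ⟨hc₀n, hc₀b⟩ := hCb c₀ hc₀C
    by_contra hcon
    push_neg at hcon
    have hbc₀ : b c₀ ≤ b c := hbmono c hcn c₀ (le_of_lt hlt)
    have hml : m * l = l * m := Nat.mul_comm m l
    have hdiv : b c₀ / m = l := by
      have h1 : b c₀ = m * l + (b c₀ - l * m) := by omega
      have h2 : b c₀ - l * m < m := by omega
      rw [h1, Nat.mul_add_div hm0, Nat.div_eq_of_lt h2, Nat.add_zero]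
    have hflo : b c₀ - mfloor m (b c₀) ≠ 0 := by
      rw [mfloor, hdiv]; omega
    have hnext := hsing c₀ (by omega) hflo
    rw [mfloor, hdiv, mfloor] at hnext
    have hd : l + 1 ≤ b (c₀ + 1) / m := Nat.lt_of_mul_lt_mul_left hnext
    have h5 : m * (l+1) ≤ m * (b (c₀+1) / m) := Nat.mul_le_mul_left m hd
    have h6 : m * (b (c₀+1) / m) ≤ b (c₀+1) := by
      rw [Nat.mul_comm]; exact Nat.div_mul_le_self _ _
    have h7 : b (c₀+1) ≤ b c := hbmono c hcn (c₀+1) (by omega)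
    have hml2 : m * (l+1) = m*l + m := by ring
    omega
  set Φ := fun (g : ∀ a ∈ C', ℕ) =>
    Fout ∪ insert p₀ (C'.attach.image fun c : {x // x ∈ C'} => ((c : ℕ), g c.1 c.2)) with hΦdef
  have himgcard : ∀ (g : ∀ a ∈ C', ℕ),
      (C'.attach.image fun c : {x // x ∈ C'} => ((c : ℕ), g c.1 c.2)).card = C'.card := by
    intro g
    rw [Finset.card_image_of_injOn, Finset.card_attach]
    intro p _ q _ h
    exact Subtype.ext (congrArg Prod.fst h)
  have hgR : ∀ g ∈ C'.pi (fun _ => R), ∀ (c) (h : c ∈ C'), g c h ∈ R := by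
    intro g hg c h
    exact Finset.mem_pi.1 hg c h
  have hmemΦ : ∀ (g : ∀ a ∈ C', ℕ) (x : ℕ × ℕ), x ∈ Φ g ↔
      x ∈ Fout ∨ x = p₀ ∨ ∃ (c : ℕ) (hc : c ∈ C'), x = (c, g c hc) := by
    intro g x
    simp only [hΦdef, Finset.mem_union, Finset.mem_insert, Finset.mem_image,
      Finset.mem_attach, true_and, Subtype.exists]
    constructor
    · rintro (h | h | ⟨c, hc, h⟩)
      · exact Or.inl h
      · exact Or.inr (Or.inl h)
      · exact Or.inr (Or.inr ⟨c, hc, h.symm⟩)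
    · rintro (h | h | ⟨c, hc, h⟩)
      · exact Or.inl h
      · exact Or.inr (Or.inl h)
      · exact Or.inr (Or.inr ⟨c, hc, h.symm⟩)
  have hrooksΦ : ∀ g ∈ C'.pi (fun _ => R), rooksInLevel m (Φ g) l
      = insert p₀ (C'.attach.image fun c : {x // x ∈ C'} => ((c : ℕ), g c.1 c.2)) := by
    intro g hg
    ext x
    rw [rooksInLevel, Finset.mem_filter, hmemΦ]
    simp only [Finset.mem_insert, Finset.mem_image, Finset.mem_attach, true_and,
      Subtype.exists]
    constructor
    · rintro ⟨(hx | hx | ⟨c, hc, rfl⟩), hxl⟩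
      · exact absurd hxl ((hFoutmem x).1 hx).2
      · exact Or.inl hx
      · exact Or.inr ⟨c, hc, rfl⟩
    · rintro (rfl | ⟨c, hc, rfl⟩)
      · exact ⟨Or.inr (Or.inl rfl), hp₀lev⟩
      · exact ⟨Or.inr (Or.inr ⟨c, hc, rfl⟩), levelOf_of_mem_Icc hm0 (hgR g hg c hc)⟩
  have hp₀img : ∀ (g : ∀ a ∈ C', ℕ), p₀ ∉
      (C'.attach.image fun c : {x // x ∈ C'} => ((c : ℕ), g c.1 c.2)) := by
    intro g h
    obtain ⟨c, -, hceq⟩ := Finset.mem_image.1 h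
    have hcc : (c : ℕ) = c₀ := (congrArg Prod.fst hceq).trans hp₀c
    exact Finset.ne_of_mem_erase c.2 hcc
  have hcardΦ : ∀ g ∈ C'.pi (fun _ => R), (Φ g).card = F₀.card := by
    intro g hg
    have hdisj1 : Disjoint Fout (insert p₀
        (C'.attach.image fun c : {x // x ∈ C'} => ((c : ℕ), g c.1 c.2))) := by
      rw [Finset.disjoint_left]
      intro x hx hx'
      have hxl := ((hFoutmem x).1 hx).2
      rcases Finset.mem_insert.1 hx' with rfl | hx''
      · exact hxl hp₀lev
      · obtain ⟨c, -, hceq⟩ := Finset.mem_image.1 hx''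
        apply hxl
        rw [← hceq]
        exact levelOf_of_mem_Icc hm0 (hgR g hg c c.2)
    have hbeta : Φ g = Fout ∪ insert p₀
        (C'.attach.image fun c : {x // x ∈ C'} => ((c : ℕ), g c.1 c.2)) := by
      rw [hΦdef]
    rw [hbeta, Finset.card_union_of_disjoint hdisj1,
      Finset.card_insert_of_notMem (hp₀img g), himgcard]
    have hpart := Finset.card_filter_add_card_filter_not
      (s := F₀) (p := fun p => levelOf m p.2 = l)
    have e1 : (F₀.filter (fun p => levelOf m p.2 = l)).card = L₀.card := rfl
    have e2 : (F₀.filter (fun p => ¬ levelOf m p.2 = l)).card = Fout.card := rfl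
    rw [e1, e2] at hpart
    omega
  have hsubΦ : ∀ g ∈ C'.pi (fun _ => R), Φ g ⊆ cellFinset n b := by
    intro g hg x hx
    rw [hmemΦ] at hx
    rcases hx with hx | rfl | ⟨c, hc, rfl⟩
    · exact hsub (hFoutsub hx)
    · exact hsub hp₀F
    · rw [mem_cellFinset]
      have hgc := hgR g hg c hc
      rw [hRdef, Finset.mem_Icc] at hgc
      have hGc := hG c hc
      refine ⟨(hCb c (Finset.mem_of_mem_erase hc)).1, ?_, ?_⟩
      · show 1 ≤ g c hc; omega
      · show g c hc ≤ b c; omega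
  have hcolΦ : ∀ g ∈ C'.pi (fun _ => R), ∀ p ∈ Φ g, ∀ q ∈ Φ g, p ≠ q → p.1 ≠ q.1 := by
    intro g hg p hp q hq hne
    rw [hmemΦ] at hp hq
    rcases hp with hp | rfl | ⟨c, hc, rfl⟩ <;> rcases hq with hq | rfl | ⟨c', hc', rfl⟩
    · exact hcol p (hFoutsub hp) q (hFoutsub hq) hne
    · intro h; apply hColsOut p hp; rw [h, hp₀c]; exact hc₀C
    · intro h; apply hColsOut p hp; rw [h]; exact Finset.mem_of_mem_erase hc'
    · intro h; apply hColsOut q hq; rw [← h, hp₀c]; exact hc₀C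
    · exact absurd rfl hne
    · intro h; exact Finset.ne_of_mem_erase hc' ((h.symm.trans hp₀c))
    · intro h; apply hColsOut q hq; rw [← h]; exact Finset.mem_of_mem_erase hc
    · intro h; exact Finset.ne_of_mem_erase hc (h.trans hp₀c)
    · intro h
      apply hne
      have hcc : c = c' := h
      subst hcc
      rfl
  have hΦmem : ∀ g ∈ C'.pi (fun _ => R), Φ g ∈ classOf m n b l F₀ := by
    intro g hg
    rw [classOf, Finset.mem_filter]
    refine ⟨?_, ?_, ?_, ?_⟩
    · rw [filePlacements, Finset.mem_filter, Finset.mem_powerset]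
      exact ⟨hsubΦ g hg, hcardΦ g hg, hcolΦ g hg⟩
    · ext x
      rw [Finset.mem_filter, Finset.mem_filter]
      constructor
      · rintro ⟨hx, hxl⟩
        rw [hmemΦ] at hx
        rcases hx with hx | rfl | ⟨c, hc, rfl⟩
        · exact ⟨hFoutsub hx, ((hFoutmem _).1 hx).2⟩
        · exact absurd hp₀lev hxl
        · exact absurd (levelOf_of_mem_Icc hm0 (hgR g hg c hc)) hxl
      · rintro ⟨hx, hxl⟩
        exact ⟨(hmemΦ g x).2 (Or.inl ((hFoutmem x).2 ⟨hx, hxl⟩)), hxl⟩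
    · rw [hrooksΦ g hg, Finset.image_insert]
      have himg2 : (C'.attach.image fun c : {x // x ∈ C'} =>
          ((c : ℕ), g c.1 c.2)).image Prod.fst = C' := by
        rw [Finset.image_image]
        ext y
        simp only [Finset.mem_image, Finset.mem_attach, true_and, Subtype.exists,
          Function.comp]
        constructor
        · rintro ⟨c, hc, rfl⟩; exact hc
        · intro hy; exact ⟨y, hy, rfl⟩
      rw [himg2, hp₀c, hC'def, Finset.insert_erase hc₀C, hCdef, hL₀def]
    · intro p hp hmin
      rw [hrooksΦ g hg] at hp hmin
      rcases Finset.mem_insert.1 hp with rfl | hp'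
      · exact hp₀F
      · obtain ⟨c, -, rfl⟩ := Finset.mem_image.1 hp'
        exfalso
        have h1 := hmin p₀ (Finset.mem_insert_self _ _)
        have h2 : c₀ ≤ (c : ℕ) := hc₀min _ (Finset.mem_of_mem_erase c.2)
        have h3 : (c : ℕ) ≠ c₀ := Finset.ne_of_mem_erase c.2
        rw [hp₀c] at h1
        exact h3 (le_antisymm h1 h2)
  have hclass : classOf m n b l F₀ = (C'.pi fun _ => R).image Φ := by
    ext F
    rw [Finset.mem_image]
    constructor
    · intro hF
      rw [classOf, Finset.mem_filter] at hF
      obtain ⟨hFfile, hcond1, hcond2, hcond3⟩ := hF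
      rw [filePlacements, Finset.mem_filter, Finset.mem_powerset] at hFfile
      obtain ⟨hFsub, hFcard, hFcol⟩ := hFfile
      have hFuniq : ∀ p ∈ F, ∀ q ∈ F, p.1 = q.1 → p = q := by
        intro p hp q hq h
        by_contra hne
        exact hFcol p hp q hq hne h
      have hLFmem : ∀ p, p ∈ rooksInLevel m F l ↔ p ∈ F ∧ levelOf m p.2 = l := by
        intro p; rw [rooksInLevel, Finset.mem_filter]
      have hcols : (rooksInLevel m F l).image Prod.fst = C := by
        rw [hcond2, hCdef, hL₀def]
      have hex : ∀ c ∈ C', ∃ p, p ∈ rooksInLevel m F l ∧ p.1 = c := by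
        intro c hc
        have hcim : c ∈ (rooksInLevel m F l).image Prod.fst := by
          rw [hcols]; exact Finset.mem_of_mem_erase hc
        obtain ⟨p, hp, hpc⟩ := Finset.mem_image.1 hcim
        exact ⟨p, hp, hpc⟩
      choose q hq hqc using hex
      have hp₀F' : p₀ ∈ rooksInLevel m F l := by
        have hcim : c₀ ∈ (rooksInLevel m F l).image Prod.fst := by
          rw [hcols]; exact hc₀C
        obtain ⟨p', hp', hp'c⟩ := Finset.mem_image.1 hcim
        have hminp : ∀ q' ∈ rooksInLevel m F l, p'.1 ≤ q'.1 := by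
          intro q' hq'
          have hq'C : q'.1 ∈ C := by
            rw [← hcols]; exact Finset.mem_image_of_mem _ hq'
          rw [hp'c]
          exact hc₀min _ hq'C
        have hp'F₀ := hcond3 p' hp' hminp
        have heqp : p' = p₀ := huniq p' hp'F₀ p₀ hp₀F (hp'c.trans hp₀c.symm)
        rw [← heqp]; exact hp'
      refine ⟨fun c hc => (q c hc).2, ?_, ?_⟩
      · rw [Finset.mem_pi]
        intro c hc
        have h1 := (hLFmem _).1 (hq c hc)
        exact mem_Icc_of_levelOf hm0 (mem_cellFinset.1 (hFsub h1.1)).2.1 h1.2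
      · have himgLF : insert p₀ (C'.attach.image fun c : {x // x ∈ C'} =>
            ((c : ℕ), (q c.1 c.2).2)) = rooksInLevel m F l := by
          ext x
          rw [Finset.mem_insert]
          constructor
          · rintro (rfl | hx)
            · exact hp₀F'
            · obtain ⟨c, -, rfl⟩ := Finset.mem_image.1 hx
              have hqq : ((c : ℕ), (q c.1 c.2).2) = q c.1 c.2 := by
                rw [Prod.ext_iff]
                exact ⟨(hqc c.1 c.2).symm, rfl⟩
              rw [hqq]
              exact hq c.1 c.2
          · intro hx
            have hxC : x.1 ∈ C := by
              rw [← hcols]; exact Finset.mem_image_of_mem _ hx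
            by_cases hxc : x.1 = c₀
            · left
              exact hFuniq x ((hLFmem x).1 hx).1 p₀ ((hLFmem p₀).1 hp₀F').1
                (hxc.trans hp₀c.symm)
            · right
              have hxC' : x.1 ∈ C' := Finset.mem_erase.2 ⟨hxc, hxC⟩
              rw [Finset.mem_image]
              refine ⟨⟨x.1, hxC'⟩, Finset.mem_attach _ _, ?_⟩
              have heqx := hFuniq (q x.1 hxC') ((hLFmem _).1 (hq x.1 hxC')).1 x
                ((hLFmem x).1 hx).1 (hqc x.1 hxC')
              rw [Prod.ext_iff]
              exact ⟨rfl, by rw [heqx]⟩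
        have hFdecomp : F = Fout ∪ rooksInLevel m F l := by
          ext x
          rw [Finset.mem_union]
          constructor
          · intro hx
            by_cases hxl : levelOf m x.2 = l
            · exact Or.inr ((hLFmem x).2 ⟨hx, hxl⟩)
            · left
              rw [hFoutdef, ← hcond1, Finset.mem_filter]
              exact ⟨hx, hxl⟩
          · rintro (hx | hx)
            · rw [hFoutdef, ← hcond1, Finset.mem_filter] at hx
              exact hx.1
            · exact ((hLFmem x).1 hx).1
        rw [hΦdef]
        simp only
        rw [himgLF, ← hFdecomp]
    · rintro ⟨g, hg, rfl⟩
      exact hΦmem g hg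
  have hΦinj : ∀ g ∈ C'.pi (fun _ => R), ∀ g' ∈ C'.pi (fun _ => R),
      Φ g = Φ g' → g = g' := by
    intro g hg g' hg' h
    funext c hc
    have hx : ((c : ℕ), g c hc) ∈ Φ g := (hmemΦ g _).2 (Or.inr (Or.inr ⟨c, hc, rfl⟩))
    rw [h, hmemΦ] at hx
    rcases hx with hx | hx | ⟨c', hc', heq⟩
    · exact absurd (levelOf_of_mem_Icc hm0 (hgR g hg c hc)) ((hFoutmem _).1 hx).2
    · exact absurd ((congrArg Prod.fst hx).trans hp₀c) (Finset.ne_of_mem_erase hc)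
    · have hcc : c = c' := congrArg Prod.fst heq
      subst hcc
      exact congrArg Prod.snd heq
  have hwt : ∀ g ∈ C'.pi (fun _ => R), wtm m (Φ g)
      = (∏ j ∈ Fout.image Prod.snd, mfall 1 m ((Fout.filter fun p => p.2 = j).card))
        * ∏ j ∈ R, mfall 1 m ((if p₀.2 = j then 1 else 0)
            + (C'.attach.filter (fun a => g a.1 a.2 = j)).card) := by
    intro g hg
    have hWsub : (Φ g).image Prod.snd ⊆ Fout.image Prod.snd ∪ R := by
      intro j hj
      obtain ⟨x, hx, rfl⟩ := Finset.mem_image.1 hj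
      rw [hmemΦ] at hx
      rcases hx with hx | rfl | ⟨c, hc, rfl⟩
      · exact Finset.mem_union_left _ (Finset.mem_image_of_mem _ hx)
      · exact Finset.mem_union_right _ hp₀R
      · exact Finset.mem_union_right _ (hgR g hg c hc)
    have hdisjR : Disjoint (Fout.image Prod.snd) R := by
      rw [Finset.disjoint_left]
      intro j hj hjR
      obtain ⟨x, hx, rfl⟩ := Finset.mem_image.1 hj
      exact ((hFoutmem x).1 hx).2 (levelOf_of_mem_Icc hm0 hjR)
    rw [wtm]
    rw [Finset.prod_subset hWsub ?hone]
    case hone =>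
      intro j hj hnj
      have hfe : (Φ g).filter (fun p => p.2 = j) = ∅ := by
        rw [Finset.filter_eq_empty_iff]
        intro x hx hxj
        exact hnj (Finset.mem_image.2 ⟨x, hx, hxj⟩)
      rw [hfe]
      simp [mfall]
    rw [Finset.prod_union hdisjR]
    congr 1
    · apply Finset.prod_congr rfl
      intro j hj
      have hjR : j ∉ R := Finset.disjoint_left.1 hdisjR hj
      have hfeq : (Φ g).filter (fun p => p.2 = j) = Fout.filter (fun p => p.2 = j) := by
        ext x
        rw [Finset.mem_filter, Finset.mem_filter]
        constructor
        · rintro ⟨hx, rfl⟩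
          rw [hmemΦ] at hx
          rcases hx with hx | rfl | ⟨c, hc, rfl⟩
          · exact ⟨hx, rfl⟩
          · exact absurd hp₀R hjR
          · exact absurd (hgR g hg c hc) hjR
        · rintro ⟨hx, hxj⟩
          exact ⟨(hmemΦ g x).2 (Or.inl hx), hxj⟩
      rw [hfeq]
    · apply Finset.prod_congr rfl
      intro j hjR
      have hstep1 : (Φ g).filter (fun p => p.2 = j)
          = (insert p₀ (C'.attach.image fun c : {x // x ∈ C'} =>
              ((c : ℕ), g c.1 c.2))).filter (fun p => p.2 = j) := by
        ext x
        rw [Finset.mem_filter, Finset.mem_filter]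
        constructor
        · rintro ⟨hx, rfl⟩
          rw [hmemΦ] at hx
          rcases hx with hx | rfl | ⟨c, hc, rfl⟩
          · exact absurd (levelOf_of_mem_Icc hm0 hjR) ((hFoutmem x).1 hx).2
          · exact ⟨Finset.mem_insert_self _ _, rfl⟩
          · refine ⟨Finset.mem_insert_of_mem ?_, rfl⟩
            exact Finset.mem_image.2 ⟨⟨c, hc⟩, Finset.mem_attach _ _, rfl⟩
        · rintro ⟨hx, hxj⟩
          refine ⟨?_, hxj⟩
          rcases Finset.mem_insert.1 hx with rfl | hx'
          · exact (hmemΦ g _).2 (Or.inr (Or.inl rfl))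
          · obtain ⟨c, -, rfl⟩ := Finset.mem_image.1 hx'
            exact (hmemΦ g _).2 (Or.inr (Or.inr ⟨c, c.2, rfl⟩))
      have himgfil : ((C'.attach.image (fun c : {x // x ∈ C'} =>
          ((c : ℕ), g c.1 c.2))).filter (fun p => p.2 = j)).card
          = (C'.attach.filter (fun a => g a.1 a.2 = j)).card := by
        rw [Finset.filter_image, Finset.card_image_of_injOn]
        intro x _ y _ h
        exact Subtype.ext (congrArg Prod.fst h)
      congr 1
      rw [hstep1, Finset.filter_insert]
      by_cases hp : p₀.2 = j
      · rw [if_pos hp, if_pos hp]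
        rw [Finset.card_insert_of_notMem
          (fun hmem => hp₀img g (Finset.mem_of_mem_filter _ hmem))]
        rw [himgfil]
        omega
      · rw [if_neg hp, if_neg hp, himgfil]
        omega
  rw [hclass, Finset.sum_image hΦinj, Finset.sum_congr rfl hwt, ← Finset.mul_sum,
    key m R C' (fun j => if p₀.2 = j then 1 else 0)]
  have hfsum : (∑ j ∈ R, if p₀.2 = j then 1 else 0) = 1 := by
    rw [Finset.sum_ite_eq, if_pos hp₀R]
  rw [hfsum]
  have h0 : (0 : ℕ) ∈ Finset.range C'.card := by
    rw [Finset.mem_range]; omega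
  rw [Finset.prod_eq_zero h0 (by rw [hRcard]; push_cast; ring)]
  ring
end

section
/- Fix an integer m ≥ 2 and let B = (b_1, ..., b_n) be a singleton board with respect to m. If a level l of B contains at least two columns of B that intersect level l nontrivially, then at most the leftmost of these columns intersects level l in fewer than m cells; in particular, every column except the leftmost one intersecting level l nontrivially intersects it in a full m cells. -/
open scoped Classical

/-- Let `m ≥ 2` and let `B` be a singleton board w.r.t. `m`.  If two
columns `i < i'` of `B` both intersect a level `l` nontrivially (i.e. `b i ≥ l*m + 1`
and `b i' ≥ l*m + 1`, the cells of level `l` being those in rows `l*m + 1, …, l*m + m`),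
then the rightmost column `i'` intersects level `l` in a full `m` cells:
`b i' ≥ l*m + m`.  In particular at most the leftmost column meeting level `l`
nontrivially meets it in fewer than `m` cells. -/
theorem statement12 (m : ℕ) (hm : 2 ≤ m) (n : ℕ) (b : ℕ → ℕ)
    (hB : IsSingletonBoard m n b) (l : ℕ) (i i' : ℕ)
    (hii' : i < i') (hi' : i' < n)
    (h1 : l * m + 1 ≤ b i) (h2 : l * m + 1 ≤ b i') :
    l * m + m ≤ b i' := by
  obtain ⟨hmono, hsing⟩ := hB
  have mono : ∀ j j' : ℕ, j ≤ j' → j' < n → b j ≤ b j' := by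
    intro j j' hle hlt
    induction j' with
    | zero => simp_all
    | succ k ih =>
      rcases Nat.lt_or_ge j (k+1) with h | h
      · exact le_trans (ih (Nat.lt_succ_iff.mp h) (Nat.lt_of_succ_lt hlt))
          (hmono k hlt)
      · have : j = k + 1 := le_antisymm hle h
        simp [this]
  rcases Nat.lt_or_ge (b i) (l * m + m) with hlt | hge
  · -- b i has remainder, use singleton condition
    have hi1 : i + 1 < n := lt_of_le_of_lt hii' hi'
    have e1 : l * m ≤ b i := by omega
    have e2 : b i < (l + 1) * m := by
      have h3 : (l + 1) * m = l * m + m := by ring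
      omega
    have hdiv : b i / m = l := Nat.div_eq_of_lt_le e1 e2
    have hfl : mfloor m (b i) = l * m := by rw [mfloor, hdiv, Nat.mul_comm]
    have hne : b i - mfloor m (b i) ≠ 0 := by rw [hfl]; omega
    have := hsing i hi1 hne
    rw [hfl] at this
    have hdiv2 : l + 1 ≤ b (i + 1) / m := by
      unfold mfloor at this
      have : l < b (i + 1) / m := by
        by_contra hc
        push_neg at hc
        have h4 := Nat.mul_le_mul_left m hc
        have h5 : m * l = l * m := Nat.mul_comm m l
        omega
      omega
    have hbi1 : l * m + m ≤ b (i + 1) := by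
      have h1 : m * (l + 1) ≤ m * (b (i + 1) / m) := Nat.mul_le_mul_left m hdiv2
      have h2 : m * (b (i + 1) / m) ≤ b (i + 1) := Nat.mul_div_le _ _
      have : m * (l + 1) = l * m + m := by ring
      omega
    exact le_trans hbi1 (mono (i + 1) i' hii' hi')
  · exact le_trans hge (mono i i' (le_of_lt hii') hi')
end
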